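/- arXiv:1301.3595 — 8 statements merged into one kernel-verified Lean document; each statement's English description precedes it below -/
import Mathlib

section
/- Let w = (ε_1,…,ε_n) be a self-admissible word with recurrence time τ(w) = k. Then for each 1 ≤ i < k, one has (ε_{i+1},…,ε_k) ≺ (ε_1,…,ε_{k−i}) in the lexicographic order. -/
open Filter MeasureTheory Set
open scoped ENNReal

/-- The β-transformation `T_β x = βx - ⌊βx⌋`. -/
noncomputable def betaT (β : ℝ) : ℝ → ℝ := fun x => β * x - (⌊β * x⌋ : ℝ)

/-- The digits of the β-expansion of 1: `epsDig β i = ε_{i+1}(1,β) = ⌊β · T_β^i 1⌋`. -/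
noncomputable def epsDig (β : ℝ) (i : ℕ) : ℕ := (⌊β * (betaT β)^[i] 1⌋).toNat

/-- Strict lexicographic order on words of length `m` (identified with their
extensions by zeros). -/
def wordLexLt (m : ℕ) (a b : ℕ → ℕ) : Prop :=
  ∃ k < m, (∀ j < k, a j = b j) ∧ a k < b k

/-- Non-strict lexicographic order on words of length `m`. -/
def wordLexLe (m : ℕ) (a b : ℕ → ℕ) : Prop :=
  wordLexLt m a b ∨ ∀ j < m, a j = b j

/-- A word `w = (w 0, …, w (n-1))` is self-admissible if `σ^i w ⪯ (w 0, …, w (n-1-i))`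
for all `0 ≤ i < n`. -/
def SelfAdmissible (n : ℕ) (w : ℕ → ℕ) : Prop :=
  ∀ i < n, wordLexLe (n - i) (fun j => w (i + j)) w

/-- The recurrence time `τ(w)` of a word of length `n`: the least `1 ≤ k < n` with
`σ^k w = (w 0, …, w (n-1-k))`, and `n` if no such `k` exists. -/
noncomputable def recTime (n : ℕ) (w : ℕ → ℕ) : ℕ :=
  sInf ({k | 1 ≤ k ∧ k < n ∧ ∀ j < n - k, w (k + j) = w j} ∪ {n})

/-- The cylinder of order `n` in the parameter space: the set of `β > 1` whose
β-expansion of 1 starts with the word `w`. -/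
def cylP (n : ℕ) (w : ℕ → ℕ) : Set ℝ := {β | 1 < β ∧ ∀ i < n, epsDig β i = w i}

open Classical in
/-- The infinite β-expansion of 1: if the expansion of 1 is finite with last
nonzero digit at (0-indexed) position `m`, it is `(ε_1, …, ε_m, ε_{m+1} - 1)^∞`;
otherwise it is the expansion of 1 itself. -/
noncomputable def epsStar (β : ℝ) : ℕ → ℕ :=
  if h : ∃ m, epsDig β m ≠ 0 ∧ ∀ i, m < i → epsDig β i = 0 then
    fun i => if i % (h.choose + 1) = h.choose then epsDig β h.choose - 1
             else epsDig β (i % (h.choose + 1))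
  else epsDig β

/-- `runLenStar β n` is the number of consecutive zeros in `ε*(1,β)` just after
(1-indexed) index `n`, i.e. the largest `k` with `ε*_{n+1} = … = ε*_{n+k} = 0`. -/
noncomputable def runLenStar (β : ℝ) (n : ℕ) : ℕ :=
  sSup {k | ∀ j < k, epsStar β (n + j) = 0}

/-- `runLen β n` is the number of consecutive zeros in `ε(1,β)` just after
(1-indexed) index `n`. -/
noncomputable def runLen (β : ℝ) (n : ℕ) : ℕ :=
  sSup {k | ∀ j < k, epsDig β (n + j) = 0}

/-- Strict lexicographic order on infinite sequences. -/
def seqLexLt (a b : ℕ → ℕ) : Prop := ∃ k, (∀ j < k, a j = b j) ∧ a k < b k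

/-- Non-strict lexicographic order on infinite sequences. -/
def seqLexLe (a b : ℕ → ℕ) : Prop := seqLexLt a b ∨ a = b

/-- The β-shift `S_β` (via Parry's criterion): all sequences whose every shift is
lexicographically at most `ε*(1,β)`. -/
def Sbeta (β : ℝ) : Set (ℕ → ℕ) := {w | ∀ i, seqLexLe (fun j => w (i + j)) (epsStar β)}

/-- Lemma 3.3. If `w = (ε_1,…,ε_n)` is self-admissible with
recurrence time `τ(w) = k`, then for each `1 ≤ i < k` one has
`(ε_{i+1},…,ε_k) ≺ (ε_1,…,ε_{k-i})`. -/
theorem strict_lex_of_recTime (n k : ℕ) (w : ℕ → ℕ)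
    (hw : SelfAdmissible n w) (hk : recTime n w = k) :
    ∀ i, 1 ≤ i → i < k → wordLexLt (k - i) (fun j => w (i + j)) w := by
  simp only [recTime] at hk
  intro i hi1 hik
  have hkn : k ≤ n := by
    rw [← hk]; exact Nat.sInf_le (Or.inr rfl)
  have hmin : ∀ t, 1 ≤ t → t < n → (∀ j < n - t, w (t + j) = w j) → k ≤ t := by
    intro t h1 h2 h3
    rw [← hk]; exact Nat.sInf_le (Or.inl ⟨h1, h2, h3⟩)
  have hin : i < n := lt_of_lt_of_le hik hkn
  rcases hw i hin with hlt | heq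
  · obtain ⟨m, hm, hagree, hstrict⟩ := hlt
    by_cases hmk : m < k - i
    · exact ⟨m, hmk, hagree, hstrict⟩
    · push_neg at hmk
      exfalso
      set t := k - i with ht
      have ht1 : 1 ≤ t := by omega
      have hkltn : k < n := by
        rcases lt_or_eq_of_le hkn with h | h
        · exact h
        · omega
      have hkmem : k ∈ ({k | 1 ≤ k ∧ k < n ∧ ∀ j < n - k, w (k + j) = w j} ∪ {n} : Set ℕ) := by
        rw [← hk]; exact Nat.sInf_mem ⟨n, Or.inr rfl⟩
      have hB : ∀ j < n - k, w (k + j) = w j := by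
        rcases hkmem with h | h
        · exact h.2.2
        · exact absurd h (by simp; omega)
      set q := m - t with hq
      have hqnk : q < n - k := by omega
      have hpre : ∀ x < q, w x = w (t + x) := by
        intro x hx
        have h1 : w (i + (t + x)) = w (t + x) := hagree (t + x) (by omega)
        have h2 : i + (t + x) = k + x := by omega
        rw [h2, hB x (by omega)] at h1
        exact h1
      have hq' : w q < w (t + q) := by
        have h1 : w (i + m) < w m := hstrict
        have h2 : i + m = k + q := by omega
        have h3 : m = t + q := by omega
        rw [h2, hB q hqnk, h3] at h1
        exact h1
      have htn : t < n := by omega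
      rcases hw t htn with hlt2 | heq2
      · obtain ⟨p, hp, hag2, hst2⟩ := hlt2
        have hst2' : w (t + p) < w p := hst2
        rcases lt_trichotomy p q with h | h | h
        · have := hpre p h; omega
        · subst h; omega
        · have hg : w (t + q) = w q := hag2 q h
          omega
      · have hkt : k ≤ t := hmin t ht1 htn (fun j hj => heq2 j hj)
        omega
  · exfalso
    have := hmin i hi1 hin (fun j hj => heq j hj)
    omega
end

section
/- Suppose that the words (ε_1,…,ε_{m−1},ε_m) and (ε_1,…,ε_{m−1},ε̄_m) are both self-admissible, where 0 ≤ ε_m < ε̄_m. Then the word (ε_1,…,ε_m) has full recurrence time, i.e. τ(ε_1,…,ε_m) = m. -/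
open Filter MeasureTheory Set
open scoped ENNReal

/-- Lemma 3.4. If `(ε_1,…,ε_{m-1},ε_m)` and `(ε_1,…,ε_{m-1},ε̄_m)`
are both self-admissible with `ε_m < ε̄_m`, then `(ε_1,…,ε_m)` has full recurrence
time `τ = m`. -/
theorem full_recTime_of_two_admissible (m : ℕ) (hm : 1 ≤ m) (w : ℕ → ℕ) (b : ℕ)
    (hb : w (m - 1) < b)
    (h1 : SelfAdmissible m w)
    (h2 : SelfAdmissible m (Function.update w (m - 1) b)) :
    recTime m w = m := by
  set w' := Function.update w (m - 1) b with hw'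
  have hS : {k | 1 ≤ k ∧ k < m ∧ ∀ j < m - k, w (k + j) = w j} = (∅ : Set ℕ) := by
    ext k
    simp only [Set.mem_setOf_eq, Set.mem_empty_iff_false, iff_false]
    rintro ⟨hk1, hkm, hrec⟩
    have h := h2 k hkm
    have hlen : m - 1 - k < m - k := by omega
    have hmk : k + (m - 1 - k) = m - 1 := by omega
    have hne : m - 1 - k ≠ m - 1 := by omega
    have ha : w' (k + (m - 1 - k)) = b := by
      rw [hmk, hw', Function.update_self]
    have hb' : w' (m - 1 - k) = w (m - 1 - k) := Function.update_of_ne hne _ _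
    have hww : w (m - 1 - k) = w (m - 1) := by
      have := hrec (m - 1 - k) (by omega)
      rw [hmk] at this; omega
    rcases h with ⟨j, hj, heq, hlt⟩ | hall
    · have hj' : j ≤ m - 1 - k := by omega
      rcases lt_or_eq_of_le hj' with h' | h'
      · have e1 : w' (k + j) = w (k + j) := Function.update_of_ne (by omega) _ _
        have e2 : w' j = w j := Function.update_of_ne (by omega) _ _
        have := hrec j (by omega)
        simp only [e1, e2] at hlt
        omega
      · subst h'
        simp only at hlt
        rw [ha, hb'] at hlt
        omega
    · have := hall (m - 1 - k) hlen
      simp only at this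
      rw [ha, hb'] at this
      omega
  unfold recTime
  rw [hS, Set.empty_union]
  exact csInf_singleton m
end

section
/- Let w = (ε_1,…,ε_n) be self-admissible with recurrence time τ(w) = k. Then for every m ∈ ℕ and 0 ≤ ℓ < k with km + ℓ ≥ n, the periodic word (ε_1,…,ε_k)^m ε_1,…,ε_ℓ (m repetitions of (ε_1,…,ε_k) followed by (ε_1,…,ε_ℓ)) is self-admissible, begins with (ε_1,…,ε_n), and is the lexicographically maximal self-admissible word of length km + ℓ beginning with (ε_1,…,ε_n). -/
open Filter MeasureTheory Set
open scoped ENNReal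

/-- Lemma 3.5. Let `w = (ε_1,…,ε_n)` be self-admissible with
`τ(w) = k`. For every `m ∈ ℕ` and `0 ≤ l < k` with `km + l ≥ n`, the periodic word
`(ε_1,…,ε_k)^m ε_1,…,ε_l` (given by `j ↦ w (j % k)`) is self-admissible, begins
with `(ε_1,…,ε_n)`, and is the lexicographically maximal self-admissible word of
length `km + l` beginning with `(ε_1,…,ε_n)`. -/
theorem periodic_is_maximal (n k : ℕ) (hn : 1 ≤ n) (w : ℕ → ℕ)
    (hw : SelfAdmissible n w) (hk : recTime n w = k)
    (m l : ℕ) (hl : l < k) (hlen : n ≤ k * m + l) :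
    SelfAdmissible (k * m + l) (fun j => w (j % k)) ∧
    (∀ j < n, w (j % k) = w j) ∧
    (∀ v : ℕ → ℕ, SelfAdmissible (k * m + l) v → (∀ j < n, v j = w j) →
      wordLexLe (k * m + l) v (fun j => w (j % k))) := by

  have hkset : k ∈ ({i | 1 ≤ i ∧ i < n ∧ ∀ j < n - i, w (i + j) = w j} ∪ {n} : Set ℕ) := by
    rw [← hk]
    exact Nat.sInf_mem ⟨n, Or.inr rfl⟩
  have hk1 : 1 ≤ k := by
    rcases hkset with h | h
    · exact h.1
    · simp only [Set.mem_singleton_iff] at h; omega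
  have hkn : k ≤ n := by
    rcases hkset with h | h
    · exact le_of_lt h.2.1
    · simp only [Set.mem_singleton_iff] at h; omega
  have hmin : ∀ i, 1 ≤ i → i < k → ∃ j < n - i, w (i + j) ≠ w j := by
    intro i h1 h2
    have hni : i ∉ ({i | 1 ≤ i ∧ i < n ∧ ∀ j < n - i, w (i + j) = w j} ∪ {n} : Set ℕ) := by
      rw [← hk] at h2
      exact Nat.notMem_of_lt_sInf h2
    by_contra hc
    push_neg at hc
    exact hni (Or.inl ⟨h1, by omega, hc⟩)
  have hper : ∀ j, j < n → w j = w (j % k) := by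
    intro j
    induction j using Nat.strong_induction_on with
    | _ j ih =>
      intro hj
      rcases lt_or_ge j k with h | h
      · rw [Nat.mod_eq_of_lt h]
      · have hkn' : k < n := lt_of_le_of_lt h hj
        have hP : ∀ j < n - k, w (k + j) = w j := by
          rcases hkset with hx | hx
          · exact hx.2.2
          · simp only [Set.mem_singleton_iff] at hx; omega
        have h1 : w j = w (j - k) := by
          have := hP (j - k) (by omega)
          rwa [show k + (j - k) = j by omega] at this
        rw [h1, ih (j - k) (by omega) (by omega), Nat.mod_eq_sub_mod h]
  have hstrict : ∀ i, 1 ≤ i → i < k →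
      ∃ t < n - i, (∀ j < t, w (i + j) = w j) ∧ w (i + t) < w t := by
    intro i h1 h2
    have := hw i (by omega)
    simp only [wordLexLe, wordLexLt] at this
    rcases this with ⟨t, ht, hag, hlt⟩ | heq
    · exact ⟨t, ht, hag, hlt⟩
    · obtain ⟨j, hj, hne⟩ := hmin i h1 h2
      exact absurd (heq j hj) hne
  refine ⟨?_, ?_, ?_⟩
  · -- self-admissibility of the periodic word
    intro i hi
    rcases Nat.eq_zero_or_pos (i % k) with hi0 | hipos
    · refine Or.inr ?_
      intro j hj
      show w ((i + j) % k) = w (j % k)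
      rw [Nat.add_mod, hi0, Nat.zero_add, Nat.mod_mod_of_dvd _ dvd_rfl]
    · obtain ⟨t, ht, hag, hlt⟩ := hstrict (i % k) hipos (Nat.mod_lt _ (by omega))
      have hik : i % k < k := Nat.mod_lt _ (by omega)
      have key : ∀ j, (i + j) % k = (i % k + j) % k := by
        intro j
        conv_lhs => rw [Nat.add_mod]
        conv_rhs => rw [Nat.add_mod, Nat.mod_mod_of_dvd _ dvd_rfl]
      have hagree : ∀ j, j < t → w ((i + j) % k) = w (j % k) := by
        intro j hj
        rw [key, ← hper (i % k + j) (by omega), hag j hj, hper j (by omega)]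
      rcases lt_or_ge t (k * m + l - i) with hcase | hcase
      · refine Or.inl ⟨t, hcase, fun j hj => hagree j hj, ?_⟩
        show w ((i + t) % k) < w (t % k)
        rw [key, ← hper (i % k + t) (by omega), ← hper t (by omega)]
        exact hlt
      · exact Or.inr fun j hj => hagree j (by omega)
  · intro j hj
    exact (hper j hj).symm
  · intro v hv hvw
    by_cases hall : ∀ j < k * m + l, v j = w (j % k)
    · exact Or.inr hall
    · push_neg at hall
      have hTne : {j | j < k * m + l ∧ v j ≠ w (j % k)}.Nonempty := by
        obtain ⟨j, hj1, hj2⟩ := hall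
        exact ⟨j, hj1, hj2⟩
      set p := sInf {j | j < k * m + l ∧ v j ≠ w (j % k)} with hp
      have hpT : p < k * m + l ∧ v p ≠ w (p % k) := Nat.sInf_mem hTne
      have hagree : ∀ j, j < p → v j = w (j % k) := by
        intro j hj
        have hjn : j ∉ {j | j < k * m + l ∧ v j ≠ w (j % k)} := Nat.notMem_of_lt_sInf hj
        simp only [Set.mem_setOf_eq, not_and, not_not] at hjn
        exact hjn (by omega)
      have hpn : n ≤ p := by
        by_contra h
        push_neg at h
        exact hpT.2 ((hvw p h).trans (hper p h))
      have hlt : v p < w (p % k) := by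
        rcases lt_trichotomy (v p) (w (p % k)) with h | h | h
        · exact h
        · exact absurd h hpT.2
        · exfalso
          have hqr : k * (p / k) + p % k = p := Nat.div_add_mod p k
          have hrk : p % k < k := Nat.mod_lt _ (by omega)
          have h1 : ∀ j, j < p % k → v (k * (p / k) + j) = v j := by
            intro j hj
            rw [hagree _ (by omega), hvw j (by omega), Nat.mul_add_mod,
              Nat.mod_eq_of_lt (by omega)]
          have h2 : v p > v (p % k) := by
            rw [hvw (p % k) (by omega)]
            exact h
          have := hv (k * (p / k)) (by omega)
          simp only [wordLexLe, wordLexLt] at this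
          rcases this with ⟨t, htN, hag, hlt2⟩ | heq
          · have hlt3 : v (k * (p / k) + t) < v t := hlt2
            rcases lt_trichotomy t (p % k) with h' | h' | h'
            · have := h1 t h'
              omega
            · rw [h', hqr] at hlt3
              omega
            · have h4 : v (k * (p / k) + p % k) = v (p % k) := hag (p % k) h'
              rw [hqr] at h4
              omega
          · have h4 : v (k * (p / k) + p % k) = v (p % k) := heq (p % k) (by omega)
            rw [hqr] at h4
            omega
      exact Or.inl ⟨p, hpT.1, fun j hj => hagree j hj, hlt⟩
end

section
/- Let w = (ε_1,…,ε_n) be self-admissible with recurrence time τ(w) = k, and let β_0 = inf I_n^P(w) and β_1 = sup I_n^P(w) be the left and right endpoints of the parameter cylinder of w. Set C = (β_0 − 1)²/β_0. If k = n then the length of I_n^P(w) is at least C·β_1^{−n}. If k < n, let ℓ be the integer with ℓk < n ≤ (ℓ+1)k and t = n − ℓk; then the length of I_n^P(w) is at least C·β_1^{−n}·(ε_{t+1}/β_1 + ε_{t+2}/β_1² + … + (ε_k + 1)/β_1^{k−t}). -/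
open Filter MeasureTheory Set
open scoped ENNReal

namespace CLLB


variable {n k : ℕ} {w : ℕ → ℕ}

lemma shift_le (hadm : SelfAdmissible n w) {s v : ℕ} (hs : s < n) (hv : v < n - s)
    (hagree : ∀ j < v, w (s + j) = w j) : w (s + v) ≤ w v := by
  rcases hadm s hs with ⟨d, hd, hag, hlt⟩ | h
  · rcases lt_trichotomy d v with hdv | rfl | hdv
    · exact absurd (hagree d hdv) (by simpa using hlt.ne)
    · exact hlt.le
    · exact (hag v hdv).le
  · exact (h v hv).le

lemma le_w0 (hadm : SelfAdmissible n w) {i : ℕ} (hi : i < n) : w i ≤ w 0 := by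
  have := shift_le hadm hi (v := 0) (by omega) (by omega)
  simpa using this

lemma recTime_mem (hn : 1 ≤ n) (hk : recTime n w = k) :
    k ∈ ({m | 1 ≤ m ∧ m < n ∧ ∀ j < n - m, w (m + j) = w j} ∪ {n} : Set ℕ) := by
  rw [← hk]
  exact Nat.sInf_mem ⟨n, Or.inr rfl⟩

lemma recTime_pos (hn : 1 ≤ n) (hk : recTime n w = k) : 1 ≤ k := by
  rcases recTime_mem hn hk with h | h
  · exact h.1
  · simp only [Set.mem_singleton_iff] at h; omega

lemma recTime_le (hn : 1 ≤ n) (hk : recTime n w = k) : k ≤ n := by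
  rcases recTime_mem hn hk with h | h
  · exact h.2.1.le
  · simp only [Set.mem_singleton_iff] at h; omega

lemma recTime_per (hn : 1 ≤ n) (hk : recTime n w = k) :
    ∀ j < n - k, w (k + j) = w j := by
  rcases recTime_mem hn hk with h | h
  · exact h.2.2
  · simp only [Set.mem_singleton_iff] at h
    subst h; intro j hj; omega
  
lemma recTime_min (hk : recTime n w = k) {s : ℕ} (hs1 : 1 ≤ s) (hsn : s < n)
    (hagree : ∀ j < n - s, w (s + j) = w j) : k ≤ s := by
  rw [← hk]
  exact Nat.sInf_le (Or.inl ⟨hs1, hsn, hagree⟩)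

/-- Lemma B: for `1 ≤ s < k`, the shifted word drops strictly below `w` within the
first `k - s` letters. -/
lemma exists_drop (hn : 1 ≤ n) (hadm : SelfAdmissible n w) (hk : recTime n w = k)
    {s : ℕ} (hs1 : 1 ≤ s) (hsk : s < k) :
    ∃ d < k - s, (∀ i < d, w (s + i) = w i) ∧ w (s + d) < w d := by
  have hkn : k ≤ n := recTime_le hn hk
  have hper := recTime_per hn hk
  have hsn : s < n := lt_of_lt_of_le hsk hkn
  rcases hadm s hsn with ⟨d, hd, hag, hlt⟩ | h
  · simp only at hag hlt
    by_cases hdks : d < k - s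
    · exact ⟨d, hdks, hag, hlt⟩
    · -- agreement on first k - s letters; derive a contradiction
      exfalso
      set r := k - s with hr
      have hstar : ∀ i < r, w (s + i) = w i := fun i hi => hag i (by omega)
      have A : ∀ i, i ≤ n - k → ∀ i' < r + i, w (s + i') = w i' := by
        intro i
        induction i with
        | zero => intro _ i' hi'; exact hstar i' (by omega)
        | succ i IH =>
          intro hi i' hi'
          have hik : i < n - k := by omega
          have IH' := IH (by omega)
          rcases Nat.lt_or_ge i' (r + i) with h1 | h1
          · exact IH' i' h1
          · have hi'eq : i' = r + i := by omega
            subst hi'eq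
            have haveR : ∀ j < i, w (r + j) = w j := by
              intro j hj
              have e1 : w (s + (r + j)) = w (r + j) := IH' (r + j) (by omega)
              have e2 : w (k + j) = w j := hper j (by omega)
              rw [show s + (r + j) = k + j by omega] at e1
              rw [← e1, e2]
            have h1' : w (r + i) ≤ w i :=
              shift_le hadm (s := r) (v := i) (by omega) (by omega) haveR
            have h2' : w (s + (r + i)) ≤ w (r + i) :=
              shift_le hadm (s := s) (v := r + i) (by omega) (by omega)
                (fun j hj => IH' j hj)
            have h3' : w (s + (r + i)) = w i := by
              rw [show s + (r + i) = k + i by omega]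
              exact hper i hik
            omega
      have hfull : ∀ j < n - s, w (s + j) = w j := by
        intro j hj
        exact A (n - k) (le_refl _) j (by omega)
      have := recTime_min hk hs1 hsn hfull
      omega
  · exfalso
    have := recTime_min hk hs1 hsn (fun j hj => h j hj)
    omega

/-- `w` agrees with its `k`-periodization on `[0, n)`. -/
lemma periodize (hn : 1 ≤ n) (hk : recTime n w = k) :
    ∀ a < n, w (a % k) = w a := by
  have hk1 := recTime_pos hn hk
  have hper := recTime_per hn hk
  intro a
  induction a using Nat.strong_induction_on with
  | _ a IH =>
    intro ha
    by_cases hak : a < k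
    · rw [Nat.mod_eq_of_lt hak]
    · push_neg at hak
      have h1 : a - k < n := by omega
      have h2 : w (k + (a - k)) = w (a - k) := hper (a - k) (by omega)
      have h3 : w ((a - k) % k) = w (a - k) := IH (a - k) (by omega) h1
      rw [Nat.mod_eq_sub_mod hak, h3, ← h2,
        show k + (a - k) = a by omega]


noncomputable def val (m : ℕ) (v : ℕ → ℕ) (x : ℝ) : ℝ :=
  ∑ i ∈ Finset.range m, (v i : ℝ) * x ^ (i + 1)

lemma val_nonneg (m : ℕ) (v : ℕ → ℕ) {x : ℝ} (hx : 0 ≤ x) : 0 ≤ val m v x := by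
  apply Finset.sum_nonneg
  intro i _
  positivity

lemma val_mono_len {m m' : ℕ} (h : m ≤ m') (v : ℕ → ℕ) {x : ℝ} (hx : 0 ≤ x) :
    val m v x ≤ val m' v x := by
  apply Finset.sum_le_sum_of_subset_of_nonneg (Finset.range_subset_range.mpr h)
  intro i _ _
  positivity

lemma val_congr {m : ℕ} {u v : ℕ → ℕ} (h : ∀ i < m, u i = v i) (x : ℝ) :
    val m u x = val m v x := by
  apply Finset.sum_congr rfl
  intro i hi
  rw [h i (Finset.mem_range.mp hi)]

lemma val_add (m d : ℕ) (v : ℕ → ℕ) (x : ℝ) :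
    val (m + d) v x = val m v x + ∑ i ∈ Finset.range d, (v (m + i) : ℝ) * x ^ (m + i + 1) := by
  unfold val
  rw [Finset.sum_range_add]

lemma shift_factor (v : ℕ → ℕ) (x : ℝ) (c d : ℕ) :
    ∑ i ∈ Finset.range d, (v (c + i) : ℝ) * x ^ (c + i + 1)
      = x ^ c * ∑ i ∈ Finset.range d, (v (c + i) : ℝ) * x ^ (i + 1) := by
  rw [Finset.mul_sum]
  apply Finset.sum_congr rfl
  intro i _
  rw [show c + i + 1 = c + (i + 1) by ring, pow_add]
  ring

section Analytic

variable {n k l : ℕ} {w : ℕ → ℕ} {x : ℝ}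

/-- Block decomposition of the periodization. -/
lemma val_block (hk1 : 1 ≤ k) (w : ℕ → ℕ) (x : ℝ) (b : ℕ) :
    val ((b + 1) * k) (fun a => w (a % k)) x
      = val (b * k) (fun a => w (a % k)) x + x ^ (b * k) * val k (fun a => w (a % k)) x := by
  have h1 : (b + 1) * k = b * k + k := by ring
  have hsum : ∑ i ∈ Finset.range k, ((w ((b * k + i) % k) : ℝ)) * x ^ (b * k + i + 1)
      = x ^ (b * k) * val k (fun a => w (a % k)) x := by
    unfold val
    rw [Finset.mul_sum]
    apply Finset.sum_congr rfl
    intro i _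
    have hmod : (b * k + i) % k = i % k := by
      rw [Nat.mul_comm, Nat.mul_add_mod]
    show ((w ((b * k + i) % k) : ℝ)) * x ^ (b * k + i + 1)
        = x ^ (b * k) * (((w (i % k) : ℝ)) * x ^ (i + 1))
    rw [hmod, show b * k + i + 1 = b * k + (i + 1) by ring, pow_add]
    ring
  have h2 : val (b * k + k) (fun a => w (a % k)) x
      = val (b * k) (fun a => w (a % k)) x
        + ∑ i ∈ Finset.range k, ((w ((b * k + i) % k) : ℝ)) * x ^ (b * k + i + 1) :=
    val_add (b * k) k (fun a => w (a % k)) x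
  rw [h1, h2, hsum]

lemma pow_block (x : ℝ) (b k : ℕ) : x ^ (b * k) = (x ^ k) ^ b := by
  rw [← pow_mul, Nat.mul_comm]

/-- `val` of `b` blocks equals geometric combination. -/
lemma val_blocks (hk1 : 1 ≤ k) (w : ℕ → ℕ) (x : ℝ) (b : ℕ) :
    val (b * k) (fun a => w (a % k)) x
      = val k (fun a => w (a % k)) x * ∑ q ∈ Finset.range b, (x ^ k) ^ q := by
  induction b with
  | zero => simp [val]
  | succ b IH =>
    rw [val_block hk1, IH, Finset.sum_range_succ, pow_block]
    ring

/-- A1: if `1 < val N p x + x^N` with `N = (l+1)*k` then `1 - x^k < val k p x`. -/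
lemma valk_large (hk1 : 1 ≤ k) (hx0 : 0 < x) (hx1 : x < 1)
    (hδ : 1 < val ((l + 1) * k) (fun a => w (a % k)) x + x ^ ((l + 1) * k)) :
    1 - x ^ k < val k (fun a => w (a % k)) x := by
  set vk := val k (fun a => w (a % k)) x with hvk
  set Sg : ℝ := ∑ q ∈ Finset.range (l + 1), (x ^ k) ^ q with hSg
  have hblocks := val_blocks (w := w) (x := x) hk1 (b := l + 1)
  have hxk1 : x ^ k < 1 := pow_lt_one₀ hx0.le hx1 (by omega)
  have hxk0 : 0 < x ^ k := pow_pos hx0 k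
  have hgeom : (1 - x ^ k) * Sg = 1 - x ^ ((l + 1) * k) := by
    have := geom_sum_mul (x ^ k) (l + 1)
    rw [pow_block]
    nlinarith [this]
  have hSgpos : 0 < Sg := by
    apply Finset.sum_pos
    · intro q _
      positivity
    · exact ⟨0, Finset.mem_range.mpr (by omega)⟩
  by_contra hcon
  push_neg at hcon
  have : vk * Sg ≤ (1 - x ^ k) * Sg := by
    apply mul_le_mul_of_nonneg_right hcon hSgpos.le
  rw [hgeom] at this
  rw [hblocks] at hδ
  linarith

/-- Invariant for the block remainders. -/
lemma inv_rho (hk1 : 1 ≤ k) (hx0 : 0 < x) (hx1 : x < 1)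
    (hδ : 1 < val ((l + 1) * k) (fun a => w (a % k)) x + x ^ ((l + 1) * k)) :
    ∀ a, 1 ≤ a →
      (1 - x ^ k) * (1 - val (a * k) (fun a => w (a % k)) x)
        < x ^ (a * k) * val k (fun a => w (a % k)) x := by
  have hA1 := valk_large hk1 hx0 hx1 hδ
  have hxk1 : x ^ k < 1 := pow_lt_one₀ hx0.le hx1 (by omega)
  have hxk0 : 0 < x ^ k := pow_pos hx0 k
  intro a ha
  induction a, ha using Nat.le_induction with
  | base =>
    rw [one_mul]
    nlinarith
  | succ a ha IH =>
    have hblock := val_block (w := w) (x := x) hk1 (b := a)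
    have hxak : (0:ℝ) < x ^ (a * k) := pow_pos hx0 _
    have step : 1 - val ((a + 1) * k) (fun a => w (a % k)) x
        < x ^ k * (1 - val (a * k) (fun a => w (a % k)) x) := by
      rw [hblock]
      nlinarith
    have hpow : x ^ ((a + 1) * k) = x ^ k * x ^ (a * k) := by
      rw [← pow_add]
      congr 1
      ring
    rw [hpow]
    nlinarith

lemma rho_step (hk1 : 1 ≤ k) (hx0 : 0 < x) (hx1 : x < 1)
    (hδ : 1 < val ((l + 1) * k) (fun a => w (a % k)) x + x ^ ((l + 1) * k)) :
    ∀ a, 1 ≤ a →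
      1 - val ((a + 1) * k) (fun a => w (a % k)) x
        < x ^ k * (1 - val (a * k) (fun a => w (a % k)) x) := by
  intro a ha
  have hInv := inv_rho hk1 hx0 hx1 hδ a ha
  have hblock := val_block (w := w) (x := x) hk1 (b := a)
  rw [hblock]
  nlinarith

/-- Multiples-of-`k` case: `1 - val (q*k) p x < x^(q*k)` for `q ≥ 1`. -/
lemma rho_lt (hk1 : 1 ≤ k) (hx0 : 0 < x) (hx1 : x < 1)
    (hδ : 1 < val ((l + 1) * k) (fun a => w (a % k)) x + x ^ ((l + 1) * k)) :
    ∀ q, 1 ≤ q → 1 - val (q * k) (fun a => w (a % k)) x < x ^ (q * k) := by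
  have hA1 := valk_large hk1 hx0 hx1 hδ
  intro q hq
  induction q, hq using Nat.le_induction with
  | base =>
    rw [one_mul]
    linarith
  | succ q hq IH =>
    have hstep := rho_step hk1 hx0 hx1 hδ q hq
    have hxk0 : 0 < x ^ k := pow_pos hx0 k
    have hpow : x ^ ((q + 1) * k) = x ^ k * x ^ (q * k) := by
      rw [← pow_add]; congr 1; ring
    rw [hpow]
    nlinarith

/-- The main claim: for `1 ≤ j ≤ N`, `1 - val j p x < x^j`. -/
lemma main_claim (hn : 1 ≤ n) (hk1 : 1 ≤ k) (hkn : k ≤ n)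
    (hl2 : n ≤ (l + 1) * k)
    (hw0 : 1 ≤ w 0)
    (hdrop : ∀ s, 1 ≤ s → s < k → ∃ d < k - s, (∀ i < d, w (s + i) = w i) ∧ w (s + d) < w d)
    (hx0 : 0 < x) (hx1 : x < 1)
    (hg : val n w x < 1)
    (hδ : 1 < val ((l + 1) * k) (fun a => w (a % k)) x + x ^ ((l + 1) * k)) :
    ∀ m j, (l + 1) * k - j = m → 1 ≤ j → j ≤ (l + 1) * k →
      1 - val j (fun a => w (a % k)) x < x ^ j := by
  intro m
  induction m using Nat.strong_induction_on with
  | _ m IH =>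
    intro j hm hj1 hjN
    by_cases hs0 : j % k = 0
    · -- multiple of k
      have hq : j = (j / k) * k := by
        rw [Nat.mul_comm]
        exact (Nat.mul_div_cancel' (Nat.dvd_of_mod_eq_zero hs0)).symm
      have hq1 : 1 ≤ j / k := by
        rcases Nat.eq_zero_or_pos (j / k) with h | h
        · rw [h] at hq; omega
        · exact h
      rw [hq]
      exact rho_lt hk1 hx0 hx1 hδ (j / k) hq1
    · -- j % k = s ≠ 0
      set s := j % k with hs
      have hs1 : 1 ≤ s := by omega
      have hsk : s < k := Nat.mod_lt _ (by omega)
      obtain ⟨d, hd, hag, hlt⟩ := hdrop s hs1 hsk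
      -- j < N and N - j ≥ k - s
      have hdm : k * (j / k) + j % k = j := Nat.div_add_mod j k
      have hcomm : (j / k) * k = k * (j / k) := Nat.mul_comm _ _
      have hjk_le : j / k ≤ l := by
        by_contra hcon
        push_neg at hcon
        have h2 : (l + 1) * k ≤ (j / k) * k := Nat.mul_le_mul_right k hcon
        omega
      have hNj : k - s ≤ (l + 1) * k - j := by
        have h3 : (j / k + 1) * k ≤ (l + 1) * k := Nat.mul_le_mul_right k (by omega)
        have h4 : (j / k + 1) * k = (j / k) * k + k := Nat.succ_mul _ _
        omega
      have hjd1 : j + (d + 1) ≤ (l + 1) * k := by omega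
      -- IH at j + d + 1
      have hIH : 1 - val (j + (d + 1)) (fun a => w (a % k)) x < x ^ (j + (d + 1)) := by
        apply IH ((l + 1) * k - (j + (d + 1))) (by omega) _ rfl (by omega) hjd1
      -- expand val (j + (d+1))
      have hsplit : val (j + (d + 1)) (fun a => w (a % k)) x
          = val j (fun a => w (a % k)) x
            + ∑ i ∈ Finset.range (d + 1), ((w ((j + i) % k) : ℝ)) * x ^ (j + i + 1) :=
        val_add j (d + 1) (fun a => w (a % k)) x
      -- identify the shifted digits
      have hpw : ∀ i, i ≤ d → (j + i) % k = s + i := by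
        intro i hi
        have h1 : (j + i) % k = (j % k + i) % k := by
          conv_lhs => rw [← Nat.div_add_mod j k]
          rw [Nat.add_assoc, Nat.mul_add_mod]
        rw [h1, ← hs, Nat.mod_eq_of_lt (by omega)]
      -- sum bound
      have hsum : (∑ i ∈ Finset.range (d + 1), ((w ((j + i) % k) : ℝ)) * x ^ (j + i + 1))
          + x ^ (j + (d + 1))
          ≤ ∑ i ∈ Finset.range (d + 1), ((w i : ℝ)) * x ^ (j + i + 1) := by
        rw [Finset.sum_range_succ, Finset.sum_range_succ]
        have hmain : ∀ i ∈ Finset.range d,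
            ((w ((j + i) % k) : ℝ)) * x ^ (j + i + 1) = ((w i : ℝ)) * x ^ (j + i + 1) := by
          intro i hi
          have hi' : i < d := Finset.mem_range.mp hi
          rw [hpw i hi'.le, hag i hi']
        rw [Finset.sum_congr rfl hmain]
        have hlast : ((w ((j + d) % k) : ℝ)) * x ^ (j + d + 1) + x ^ (j + (d + 1))
            ≤ ((w d : ℝ)) * x ^ (j + d + 1) := by
          rw [hpw d le_rfl]
          have hcast : (w (s + d) : ℝ) + 1 ≤ (w d : ℝ) := by
            have : w (s + d) + 1 ≤ w d := hlt
            exact_mod_cast this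
          have hxp : (0:ℝ) < x ^ (j + d + 1) := pow_pos hx0 _
          have : j + (d + 1) = j + d + 1 := by ring
          rw [this]
          nlinarith
        linarith
      -- factor x^j
      have hfac : ∑ i ∈ Finset.range (d + 1), ((w i : ℝ)) * x ^ (j + i + 1)
          = x ^ j * val (d + 1) w x := by
        unfold val
        rw [Finset.mul_sum]
        apply Finset.sum_congr rfl
        intro i _
        rw [show j + i + 1 = j + (i + 1) by ring, pow_add]
        ring
      have hval_le : val (d + 1) w x ≤ val n w x := val_mono_len (by omega) w hx0.le
      have hxj : (0:ℝ) < x ^ j := pow_pos hx0 _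
      have hfin : x ^ j * val (d + 1) w x ≤ x ^ j * val n w x :=
        mul_le_mul_of_nonneg_left hval_le hxj.le
      have hfin2 : x ^ j * val n w x < x ^ j * 1 :=
        (mul_lt_mul_iff_right₀ hxj).mpr hg
      rw [hsplit] at hIH
      calc 1 - val j (fun a => w (a % k)) x
          < (∑ i ∈ Finset.range (d + 1), ((w ((j + i) % k) : ℝ)) * x ^ (j + i + 1))
            + x ^ (j + (d + 1)) := by
            linarith
        _ ≤ x ^ j * val (d + 1) w x := by rw [← hfac]; exact hsum
        _ ≤ x ^ j * val n w x := hfin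
        _ < x ^ j := by linarith

end Analytic

section Digits

variable {n : ℕ} {w : ℕ → ℕ} {x : ℝ}

/-- If the partial values satisfy the right inequalities, then `x⁻¹` lies in the
parameter cylinder of `w`. -/
lemma mem_cylP_of_val (hn : 1 ≤ n) (hx0 : 0 < x) (hx1 : x < 1)
    (hg : val n w x < 1)
    (hrem : ∀ j, 1 ≤ j → j ≤ n → 1 - val j w x < x ^ j) :
    x⁻¹ ∈ cylP n w := by
  have hβ1 : (1:ℝ) < x⁻¹ := (one_lt_inv₀ hx0).mpr hx1
  set β := x⁻¹ with hβ
  have hx0' : x ≠ 0 := ne_of_gt hx0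
  -- remainders
  set rem : ℕ → ℝ := fun j => (1 - val j w x) / x ^ j with hremdef
  have hval_le : ∀ j, j ≤ n → val j w x ≤ val n w x := by
    intro j hj
    apply Finset.sum_le_sum_of_subset_of_nonneg (Finset.range_subset_range.mpr hj)
    intro i _ _
    positivity
  have hrem_pos : ∀ j, j ≤ n → 0 < rem j := by
    intro j hj
    apply div_pos _ (pow_pos hx0 j)
    have := hval_le j hj
    linarith
  have hrem_lt1 : ∀ j, 1 ≤ j → j ≤ n → rem j < 1 := by
    intro j h1 h2
    rw [hremdef]
    simp only
    rw [div_lt_one (pow_pos hx0 j)]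
    exact hrem j h1 h2
  have hkey : ∀ j, j < n → β * rem j = (w j : ℝ) + rem (j + 1) := by
    intro j hj
    have hsucc : val (j + 1) w x = val j w x + (w j : ℝ) * x ^ (j + 1) :=
      Finset.sum_range_succ _ j
    rw [hremdef]
    simp only
    rw [hβ]
    field_simp
    rw [hsucc]
    ring
  have hfloor : ∀ j, j < n → ⌊β * rem j⌋ = (w j : ℤ) := by
    intro j hj
    rw [hkey j hj]
    have : ((w j : ℝ)) = ((w j : ℤ) : ℝ) := by push_cast; ring
    rw [this, Int.floor_intCast_add]
    have h0 : ⌊rem (j + 1)⌋ = 0 := by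
      rw [Int.floor_eq_zero_iff]
      constructor
      · exact (hrem_pos (j + 1) hj).le
      · exact hrem_lt1 (j + 1) (by omega) hj
    omega
  have hiter : ∀ j, j ≤ n → (betaT β)^[j] 1 = rem j := by
    intro j
    induction j with
    | zero =>
      intro _
      simp [rem, val]
    | succ j IH =>
      intro hj
      rw [Function.iterate_succ_apply', IH (by omega)]
      unfold betaT
      rw [hfloor j (by omega), hkey j (by omega)]
      push_cast
      ring
  refine ⟨hβ1, ?_⟩
  intro i hi
  unfold epsDig
  rw [hiter i (by omega), hfloor i hi]
  simp

end Digits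

-- NEW MATERIAL

lemma val_continuous (m : ℕ) (v : ℕ → ℕ) : Continuous fun y : ℝ => val m v y := by
  unfold val
  exact continuous_finset_sum _ (fun i _ => continuous_const.mul (continuous_pow _))

lemma val_mono (m : ℕ) (v : ℕ → ℕ) {a b : ℝ} (ha : 0 ≤ a) (hab : a ≤ b) :
    val m v a ≤ val m v b := by
  apply Finset.sum_le_sum
  intro i _
  exact mul_le_mul_of_nonneg_left (pow_le_pow_left₀ ha hab _) (Nat.cast_nonneg _)

lemma val_strict {n : ℕ} {v : ℕ → ℕ} (hn : 1 ≤ n) (hv0 : 1 ≤ v 0) {a b : ℝ}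
    (ha : 0 ≤ a) (hab : a < b) : val n v a < val n v b := by
  apply Finset.sum_lt_sum
  · intro i _
    exact mul_le_mul_of_nonneg_left (pow_le_pow_left₀ ha hab.le _) (Nat.cast_nonneg _)
  · refine ⟨0, Finset.mem_range.mpr (by omega), ?_⟩
    have h1 : (1:ℝ) ≤ (v 0 : ℝ) := by exact_mod_cast hv0
    have : a ^ (0 + 1) < b ^ (0 + 1) := by
      simpa using hab
    nlinarith
  
lemma zero_val (m : ℕ) (v : ℕ → ℕ) : val m v 0 = 0 := by
  unfold val
  apply Finset.sum_eq_zero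
  intro i _
  simp

/-- Identity `(1-x) * ∑_{i<m} (i+1) x^i = ∑_{i<m} x^i - m x^m`. -/
lemma deriv_sum_id (x : ℝ) (m : ℕ) :
    (1 - x) * ∑ i ∈ Finset.range m, ((i : ℝ) + 1) * x ^ i
      = (∑ i ∈ Finset.range m, x ^ i) - (m : ℝ) * x ^ m := by
  induction m with
  | zero => simp
  | succ m IH =>
    rw [Finset.sum_range_succ, Finset.sum_range_succ (f := fun i => x ^ i), mul_add, IH]
    push_cast
    ring

lemma deriv_sum_le {x : ℝ} (hx0 : 0 ≤ x) (hx1 : x < 1) (m : ℕ) :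
    ∑ i ∈ Finset.range m, ((i : ℝ) + 1) * x ^ i ≤ 1 / (1 - x) ^ 2 := by
  have h1 : (0:ℝ) < 1 - x := by linarith
  rw [le_div_iff₀ (by positivity)]
  have hid := deriv_sum_id x m
  have hgeo : (1 - x) * ∑ i ∈ Finset.range m, x ^ i = 1 - x ^ m := by
    have h := geom_sum_mul x m
    linear_combination -h
  have hxm : (0:ℝ) ≤ x ^ m := pow_nonneg hx0 m
  calc (∑ i ∈ Finset.range m, ((i : ℝ) + 1) * x ^ i) * (1 - x) ^ 2
      = (1 - x) * ((1 - x) * ∑ i ∈ Finset.range m, ((i : ℝ) + 1) * x ^ i) := by ring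
    _ = (1 - x) * ((∑ i ∈ Finset.range m, x ^ i) - (m : ℝ) * x ^ m) := by rw [hid]
    _ = (1 - x ^ m) - (1 - x) * ((m : ℝ) * x ^ m) := by rw [mul_sub, hgeo]
    _ ≤ 1 := by
        have : (0:ℝ) ≤ (1 - x) * ((m : ℝ) * x ^ m) := by positivity
        linarith

/-- `x^m - y^m ≤ m x^(m-1) (x - y)` for `0 ≤ y ≤ x`, in the form we need. -/
lemma pow_diff_le {x y : ℝ} (hy0 : 0 ≤ y) (hyx : y ≤ x) (i : ℕ) :
    x ^ (i + 1) - y ^ (i + 1) ≤ ((i : ℝ) + 1) * x ^ i * (x - y) := by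
  have hx0 : 0 ≤ x := hy0.trans hyx
  have hgeo := geom_sum₂_mul x y (i + 1)
  have hsum : ∑ j ∈ Finset.range (i + 1), x ^ j * y ^ (i + 1 - 1 - j)
      ≤ ((i : ℝ) + 1) * x ^ i := by
    have : ∀ j ∈ Finset.range (i + 1), x ^ j * y ^ (i + 1 - 1 - j) ≤ x ^ i := by
      intro j hj
      have hj' : j < i + 1 := Finset.mem_range.mp hj
      have h1 : y ^ (i - j) ≤ x ^ (i - j) := pow_le_pow_left₀ hy0 hyx _
      have h2 : x ^ j * y ^ (i - j) ≤ x ^ j * x ^ (i - j) :=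
        mul_le_mul_of_nonneg_left h1 (pow_nonneg hx0 _)
      have h3 : x ^ j * x ^ (i - j) = x ^ i := by
        rw [← pow_add]
        congr 1
        omega
      simpa [Nat.add_sub_cancel, h3] using h2
    calc ∑ j ∈ Finset.range (i + 1), x ^ j * y ^ (i + 1 - 1 - j)
        ≤ ∑ _j ∈ Finset.range (i + 1), x ^ i := Finset.sum_le_sum this
      _ = ((i : ℝ) + 1) * x ^ i := by
          rw [Finset.sum_const, Finset.card_range]
          push_cast
          ring
  have hxy : 0 ≤ x - y := by linarith
  calc x ^ (i + 1) - y ^ (i + 1)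
      = (∑ j ∈ Finset.range (i + 1), x ^ j * y ^ (i + 1 - 1 - j)) * (x - y) := hgeo.symm
    _ ≤ (((i : ℝ) + 1) * x ^ i) * (x - y) := mul_le_mul_of_nonneg_right hsum hxy




set_option maxHeartbeats 1000000 in
/-- Main key lemma: the cylinder length lower bound, general form. -/
lemma key (n k l t : ℕ) (w : ℕ → ℕ) (hn : 1 ≤ n) (hadm : SelfAdmissible n w)
    (hk : recTime n w = k) (hl : l * k < n) (hl2 : n ≤ (l + 1) * k) (ht : t = n - l * k) :
    ((sInf (cylP n w) - 1) ^ 2 / sInf (cylP n w)) * sSup (cylP n w) ^ (-(n : ℤ)) *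
        ((∑ j ∈ Finset.range (k - t), (w (t + j) : ℝ) / sSup (cylP n w) ^ (j + 1)) +
          1 / sSup (cylP n w) ^ (k - t)) ≤
      Metric.diam (cylP n w) := by
  have hk1 : 1 ≤ k := recTime_pos hn hk
  have hkn : k ≤ n := recTime_le hn hk
  by_cases hw0 : 1 ≤ w 0
  · -- main case
    have hdrop : ∀ s, 1 ≤ s → s < k →
        ∃ d < k - s, (∀ i < d, w (s + i) = w i) ∧ w (s + d) < w d :=
      fun s hs1 hsk => exists_drop hn hadm hk hs1 hsk
    have hwp : ∀ a < n, w (a % k) = w a := periodize hn hk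
    have hlk : (l + 1) * k = l * k + k := by ring
    have ht1 : 1 ≤ t := by omega
    have htk : t ≤ k := by omega
    have hNeq : (l + 1) * k = n + (k - t) := by omega
    have hnN : n ≤ (l + 1) * k := hl2
    have hN1 : 1 ≤ (l + 1) * k := by omega
    -- root xB of the h-function
    have hconth : Continuous fun y : ℝ => val ((l + 1) * k) (fun a => w (a % k)) y + y ^ ((l + 1) * k) :=
      (val_continuous _ _).add (continuous_pow _)
    have hh0 : val ((l + 1) * k) (fun a => w (a % k)) 0 + (0:ℝ) ^ ((l + 1) * k) = 0 := by
      rw [zero_val, zero_pow (by omega)]; ring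
    have hh1 : (2:ℝ) ≤ val ((l + 1) * k) (fun a => w (a % k)) 1 + 1 ^ ((l + 1) * k) := by
      have h1 : ((w (0 % k) : ℝ)) * (1:ℝ) ^ (0 + 1) ≤ val ((l + 1) * k) (fun a => w (a % k)) 1 := by
        apply Finset.single_le_sum (f := fun i => ((w (i % k) : ℝ)) * (1:ℝ) ^ (i + 1)) _
          (Finset.mem_range.mpr (by omega))
        intro i _
        positivity
      have h2 : (1:ℝ) ≤ (w (0 % k) : ℝ) := by
        rw [Nat.zero_mod]
        exact_mod_cast hw0
      rw [one_pow] at h1 ⊢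
      rw [mul_one] at h1
      linarith
    obtain ⟨xB, hxBmem, hxBroot⟩ :
        ∃ xB ∈ Icc (0:ℝ) 1, val ((l + 1) * k) (fun a => w (a % k)) xB + xB ^ ((l + 1) * k) = 1 := by
      have hsub := intermediate_value_Icc (zero_le_one (α := ℝ)) hconth.continuousOn
      have h1mem : (1:ℝ) ∈ Icc (val ((l + 1) * k) (fun a => w (a % k)) 0 + (0:ℝ) ^ ((l + 1) * k))
          (val ((l + 1) * k) (fun a => w (a % k)) 1 + 1 ^ ((l + 1) * k)) := by
        rw [hh0]
        exact ⟨zero_le_one, by linarith⟩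
      obtain ⟨xB, hmem, heq⟩ := hsub h1mem
      exact ⟨xB, hmem, heq⟩
    have hxB0 : 0 < xB := by
      rcases hxBmem.1.eq_or_lt with h | h
      · exfalso
        rw [← h] at hxBroot
        rw [hh0] at hxBroot
        norm_num at hxBroot
      · exact h
    have hxB1 : xB < 1 := by
      rcases hxBmem.2.eq_or_lt with h | h
      · exfalso
        rw [h] at hxBroot
        linarith
      · exact h
    by_cases hdeg : val n w 1 ≤ 1
    · -- degenerate case : sInf = 1, constant C vanishes
      have hβB1 : 1 < xB⁻¹ := (one_lt_inv₀ hxB0).mpr hxB1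
      have hsubS : Ioo (1:ℝ) xB⁻¹ ⊆ cylP n w := by
        rintro β ⟨hβ1, hβ2⟩
        have hβ0 : (0:ℝ) < β := by linarith
        have hx0' : 0 < β⁻¹ := by positivity
        have hx1' : β⁻¹ < 1 := by
          rw [inv_lt_one_iff₀]
          right; exact hβ1
        have hxBlt : xB < β⁻¹ := by
          have h3 := inv_strictAnti₀ hβ0 hβ2
          rwa [inv_inv] at h3
        have hgx : val n w β⁻¹ < 1 :=
          lt_of_lt_of_le (val_strict hn hw0 hx0'.le hx1') hdeg
        have hδx : 1 < val ((l + 1) * k) (fun a => w (a % k)) β⁻¹ + (β⁻¹) ^ ((l + 1) * k) := by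
          have h4 : val ((l + 1) * k) (fun a => w (a % k)) xB
              ≤ val ((l + 1) * k) (fun a => w (a % k)) β⁻¹ := val_mono _ _ hxB0.le hxBlt.le
          have h5 : xB ^ ((l + 1) * k) < (β⁻¹) ^ ((l + 1) * k) :=
            pow_lt_pow_left₀ hxBlt hxB0.le (by omega)
          linarith [hxBroot]
        have hrem : ∀ j, 1 ≤ j → j ≤ n → 1 - val j w β⁻¹ < β⁻¹ ^ j := by
          intro j hj1 hj2
          have hmc := main_claim hn hk1 hkn hl2 hw0 hdrop hx0' hx1' hgx hδx
            ((l + 1) * k - j) j rfl hj1 (by omega)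
          rwa [val_congr (fun i hi => hwp i (by omega)) β⁻¹] at hmc
        have hmem := mem_cylP_of_val hn hx0' hx1' hgx hrem
        rwa [inv_inv] at hmem
      have hmid1 : (1 + xB⁻¹)/2 ∈ Ioo (1:ℝ) xB⁻¹ := ⟨by linarith, by linarith⟩
      have hne : (cylP n w).Nonempty := ⟨_, hsubS hmid1⟩
      have hSlow : ∀ β ∈ cylP n w, (1:ℝ) ≤ β := fun β hβ => hβ.1.le
      have hbddb : BddBelow (cylP n w) := ⟨1, hSlow⟩
      have hinf1 : sInf (cylP n w) = 1 := by
        apply le_antisymm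
        · have h1 : sInf (cylP n w) ≤ sInf (Ioo (1:ℝ) xB⁻¹) :=
            csInf_le_csInf hbddb ⟨_, hmid1⟩ hsubS
          rwa [csInf_Ioo hβB1] at h1
        · exact le_csInf hne hSlow
      rw [hinf1, sub_self]
      have hz : (0:ℝ) ^ 2 / 1 = 0 := by norm_num
      rw [hz, zero_mul, zero_mul]
      exact Metric.diam_nonneg
    · -- nondegenerate case
      push_neg at hdeg
      have hcontg : Continuous fun y : ℝ => val n w y := val_continuous n w
      obtain ⟨xA, hxAmem, hxAroot⟩ : ∃ xA ∈ Icc (0:ℝ) 1, val n w xA = 1 := by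
        have hsub := intermediate_value_Icc (zero_le_one (α := ℝ)) hcontg.continuousOn
        have h1mem : (1:ℝ) ∈ Icc (val n w 0) (val n w 1) := by
          rw [zero_val]
          exact ⟨zero_le_one, hdeg.le⟩
        obtain ⟨xA, hmem, heq⟩ := hsub h1mem
        exact ⟨xA, hmem, heq⟩
      have hxA0 : 0 < xA := by
        rcases hxAmem.1.eq_or_lt with h | h
        · exfalso
          rw [← h, zero_val] at hxAroot
          norm_num at hxAroot
        · exact h
      have hxA1 : xA < 1 := by
        rcases hxAmem.2.eq_or_lt with h | h
        · exfalso
          rw [h] at hxAroot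
          linarith
        · exact h
      have hgxB : val n w xB < 1 := by
        have h1 : val n w xB = val n (fun a => w (a % k)) xB :=
          (val_congr (fun i hi => hwp i hi) xB).symm
        have h2 : val n (fun a => w (a % k)) xB ≤ val ((l + 1) * k) (fun a => w (a % k)) xB :=
          val_mono_len hnN _ hxB0.le
        have h3 : 0 < xB ^ ((l + 1) * k) := pow_pos hxB0 _
        rw [h1]
        linarith [hxBroot]
      have hBA : xB < xA := by
        by_contra hcon
        push_neg at hcon
        have := val_mono n w hxA0.le hcon
        rw [hxAroot] at this
        linarith
      have hβA1 : 1 < xA⁻¹ := (one_lt_inv₀ hxA0).mpr hxA1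
      have hβAB : xA⁻¹ < xB⁻¹ := inv_strictAnti₀ hxB0 hBA
      have hβB0 : (0:ℝ) < xB⁻¹ := by positivity
      have hsubS : Ioo xA⁻¹ xB⁻¹ ⊆ cylP n w := by
        rintro β ⟨h1, h2⟩
        have hβ0 : (0:ℝ) < β := by linarith
        have hxlt : β⁻¹ < xA := by
          have h3 := inv_strictAnti₀ (by linarith : (0:ℝ) < xA⁻¹) h1
          rwa [inv_inv] at h3
        have hxgt : xB < β⁻¹ := by
          have h3 := inv_strictAnti₀ hβ0 h2
          rwa [inv_inv] at h3
        have hx0' : 0 < β⁻¹ := by positivity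
        have hx1' : β⁻¹ < 1 := lt_trans hxlt hxA1
        have hgx : val n w β⁻¹ < 1 := by
          rw [← hxAroot]
          exact val_strict hn hw0 hx0'.le hxlt
        have hδx : 1 < val ((l + 1) * k) (fun a => w (a % k)) β⁻¹ + (β⁻¹) ^ ((l + 1) * k) := by
          have h4 : val ((l + 1) * k) (fun a => w (a % k)) xB
              ≤ val ((l + 1) * k) (fun a => w (a % k)) β⁻¹ := val_mono _ _ hxB0.le hxgt.le
          have h5 : xB ^ ((l + 1) * k) < (β⁻¹) ^ ((l + 1) * k) :=
            pow_lt_pow_left₀ hxgt hxB0.le (by omega)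
          linarith [hxBroot]
        have hrem : ∀ j, 1 ≤ j → j ≤ n → 1 - val j w β⁻¹ < β⁻¹ ^ j := by
          intro j hj1 hj2
          have hmc := main_claim hn hk1 hkn hl2 hw0 hdrop hx0' hx1' hgx hδx
            ((l + 1) * k - j) j rfl hj1 (by omega)
          rwa [val_congr (fun i hi => hwp i (by omega)) β⁻¹] at hmc
        have hmem := mem_cylP_of_val hn hx0' hx1' hgx hrem
        rwa [inv_inv] at hmem
      have hmid : (xA⁻¹ + xB⁻¹)/2 ∈ Ioo xA⁻¹ xB⁻¹ := ⟨by linarith, by linarith⟩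
      have hne : (cylP n w).Nonempty := ⟨_, hsubS hmid⟩
      have hSlow : ∀ β ∈ cylP n w, (1:ℝ) ≤ β := fun β hβ => hβ.1.le
      have hbddb : BddBelow (cylP n w) := ⟨1, hSlow⟩
      have hSIcc : cylP n w ⊆ Icc (1:ℝ) ((w 0 : ℝ) + 1) := by
        rintro β ⟨hβ1, hdig⟩
        refine ⟨hβ1.le, ?_⟩
        have h0 := hdig 0 (by omega)
        unfold epsDig at h0
        simp only [Function.iterate_zero, id_eq, mul_one] at h0
        have hfl1 : (1:ℤ) ≤ ⌊β⌋ := Int.le_floor.mpr (by exact_mod_cast hβ1.le)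
        have hfl : ⌊β⌋ = (w 0 : ℤ) := by omega
        have hlt := Int.lt_floor_add_one β
        rw [hfl] at hlt
        push_cast at hlt ⊢
        linarith
      have hbddS : Bornology.IsBounded (cylP n w) := (Metric.isBounded_Icc _ _).subset hSIcc
      have hAle : sInf (cylP n w) ≤ xA⁻¹ := by
        have h1 : sInf (cylP n w) ≤ sInf (Ioo xA⁻¹ xB⁻¹) :=
          csInf_le_csInf hbddb ⟨_, hmid⟩ hsubS
        rwa [csInf_Ioo hβAB] at h1
      have hA1 : 1 ≤ sInf (cylP n w) := le_csInf hne hSlow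
      have hBge : xB⁻¹ ≤ sSup (cylP n w) := by
        have h1 : sSup (Ioo xA⁻¹ xB⁻¹) ≤ sSup (cylP n w) :=
          csSup_le_csSup hbddS.bddAbove ⟨_, hmid⟩ hsubS
        rwa [csSup_Ioo hβAB] at h1
      have hdiam : xB⁻¹ - xA⁻¹ ≤ Metric.diam (cylP n w) := by
        have h1 : Metric.diam (Ioo xA⁻¹ xB⁻¹) ≤ Metric.diam (cylP n w) :=
          Metric.diam_mono hsubS hbddS
        rwa [Real.diam_Ioo hβAB.le] at h1
      set A := sInf (cylP n w) with hAdef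
      set B := sSup (cylP n w) with hBdef
      have hB1 : 1 < B := lt_of_lt_of_le (lt_trans hβA1 hβAB) hBge
      have hB0 : (0:ℝ) < B := by linarith
      have hzpow : B ^ (-(n:ℤ)) = (B⁻¹) ^ n := by
        rw [zpow_neg, zpow_natCast, inv_pow]
      have hyB : B⁻¹ ≤ xB := by
        have h1 : B⁻¹ ≤ (xB⁻¹)⁻¹ := by
          apply inv_anti₀ hβB0 hBge
        rwa [inv_inv] at h1
      have hyB0 : (0:ℝ) < B⁻¹ := by positivity
      have hFB : (∑ j ∈ Finset.range (k - t), (w (t + j) : ℝ) / B ^ (j + 1)) + 1 / B ^ (k - t)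
          = val (k - t) (fun j => w (t + j)) B⁻¹ + (B⁻¹) ^ (k - t) := by
        unfold val
        congr 1
        · apply Finset.sum_congr rfl
          intro j _
          rw [div_eq_mul_inv, ← inv_pow]
        · rw [one_div, ← inv_pow]
      have hFle : val (k - t) (fun j => w (t + j)) B⁻¹ + (B⁻¹) ^ (k - t)
          ≤ val (k - t) (fun j => w (t + j)) xB + xB ^ (k - t) := by
        have h1 := val_mono (k - t) (fun j => w (t + j)) hyB0.le hyB
        have h2 : (B⁻¹) ^ (k - t) ≤ xB ^ (k - t) := pow_le_pow_left₀ hyB0.le hyB _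
        linarith
      have hCle : (A - 1) ^ 2 / A ≤ (xA⁻¹ - 1) ^ 2 / xA⁻¹ := by
        have hA0 : (0:ℝ) < A := by linarith
        have hβA0 : (0:ℝ) < xA⁻¹ := by positivity
        rw [div_le_div_iff₀ hA0 hβA0]
        have hAβ : A ≤ xA⁻¹ := hAle
        have hprod : (1:ℝ) ≤ A * xA⁻¹ := by
          calc (1:ℝ) = 1 * 1 := by ring
            _ ≤ A * xA⁻¹ := mul_le_mul hA1 hβA1.le zero_le_one (by linarith)
        nlinarith [mul_nonneg (sub_nonneg.mpr hAβ) (sub_nonneg.mpr hprod)]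
      have hF0 : 0 ≤ val (k - t) (fun j => w (t + j)) B⁻¹ + (B⁻¹) ^ (k - t) := by
        have := val_nonneg (k - t) (fun j => w (t + j)) hyB0.le
        positivity
      have hC0 : 0 ≤ (A - 1) ^ 2 / A := by
        have hA0 : (0:ℝ) < A := by linarith
        positivity
      have hCA0 : 0 ≤ (xA⁻¹ - 1) ^ 2 / xA⁻¹ := by positivity
      have hzle : (B⁻¹) ^ n ≤ xB ^ n := pow_le_pow_left₀ hyB0.le hyB n
      have step1 : (A - 1) ^ 2 / A * B ^ (-(n:ℤ)) *
            ((∑ j ∈ Finset.range (k - t), (w (t + j) : ℝ) / B ^ (j + 1)) + 1 / B ^ (k - t))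
          ≤ (xA⁻¹ - 1) ^ 2 / xA⁻¹ * xB ^ n *
            (val (k - t) (fun j => w (t + j)) xB + xB ^ (k - t)) := by
        rw [hzpow, hFB]
        have hfac : (A - 1) ^ 2 / A * (B⁻¹) ^ n ≤ (xA⁻¹ - 1) ^ 2 / xA⁻¹ * xB ^ n :=
          mul_le_mul hCle hzle (by positivity) hCA0
        exact mul_le_mul hfac hFle hF0 (by positivity)
      have hid : xB ^ n * (val (k - t) (fun j => w (t + j)) xB + xB ^ (k - t))
          = 1 - val n w xB := by
        have hsplit : val (n + (k - t)) (fun a => w (a % k)) xB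
            = val n (fun a => w (a % k)) xB
              + ∑ j ∈ Finset.range (k - t), ((w ((n + j) % k) : ℝ)) * xB ^ (n + j + 1) :=
          val_add n (k - t) (fun a => w (a % k)) xB
        have hmod : ∀ j < k - t, (n + j) % k = t + j := by
          intro j hj
          have hcomm : l * k = k * l := Nat.mul_comm _ _
          have h1 : n + j = k * l + (t + j) := by omega
          rw [h1, Nat.mul_add_mod, Nat.mod_eq_of_lt (by omega)]
        have hshift : ∑ j ∈ Finset.range (k - t), ((w ((n + j) % k) : ℝ)) * xB ^ (n + j + 1)
            = xB ^ n * val (k - t) (fun j => w (t + j)) xB := by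
          unfold val
          rw [Finset.mul_sum]
          apply Finset.sum_congr rfl
          intro j hj
          rw [hmod j (Finset.mem_range.mp hj), show n + j + 1 = n + (j + 1) by ring, pow_add]
          ring
        have hcong : val n (fun a => w (a % k)) xB = val n w xB :=
          val_congr (fun i hi => hwp i hi) xB
        have hroot' : val (n + (k - t)) (fun a => w (a % k)) xB + xB ^ (n + (k - t)) = 1 := by
          rw [← hNeq]
          exact hxBroot
        have hpown : xB ^ (n + (k - t)) = xB ^ n * xB ^ (k - t) := pow_add xB n (k - t)
        rw [hsplit, hshift, hcong, hpown] at hroot'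
        linarith [hroot']
      have hSn := deriv_sum_le hxA0.le hxA1 n
      have hw0xA : (w 0 : ℝ) * xA ≤ 1 := by
        have h1 : ((w 0 : ℝ)) * xA ^ (0 + 1) ≤ val n w xA := by
          apply Finset.single_le_sum (f := fun i => ((w i : ℝ)) * xA ^ (i + 1)) _
            (Finset.mem_range.mpr (by omega))
          intro i _
          positivity
        rw [pow_one] at h1
        rw [hxAroot] at h1
        exact h1
      have hdiff : val n w xA - val n w xB
          ≤ (xA - xB) * (w 0 : ℝ) * ∑ i ∈ Finset.range n, ((i : ℝ) + 1) * xA ^ i := by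
        have hterm : ∀ i ∈ Finset.range n,
            (w i : ℝ) * xA ^ (i + 1) - (w i : ℝ) * xB ^ (i + 1)
              ≤ (xA - xB) * (w 0 : ℝ) * (((i : ℝ) + 1) * xA ^ i) := by
          intro i hi
          have hi' : i < n := Finset.mem_range.mp hi
          have h1 : xA ^ (i + 1) - xB ^ (i + 1) ≤ ((i : ℝ) + 1) * xA ^ i * (xA - xB) :=
            pow_diff_le hxB0.le hBA.le i
          have h2 : (w i : ℝ) ≤ (w 0 : ℝ) := by exact_mod_cast le_w0 hadm hi'
          have h3 : 0 ≤ ((i : ℝ) + 1) * xA ^ i * (xA - xB) := by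
            apply mul_nonneg (by positivity) (by linarith)
          have h4 : (w i : ℝ) * (xA ^ (i + 1) - xB ^ (i + 1))
              ≤ (w i : ℝ) * (((i : ℝ) + 1) * xA ^ i * (xA - xB)) :=
            mul_le_mul_of_nonneg_left h1 (Nat.cast_nonneg _)
          have h5 : (w i : ℝ) * (((i : ℝ) + 1) * xA ^ i * (xA - xB))
              ≤ (w 0 : ℝ) * (((i : ℝ) + 1) * xA ^ i * (xA - xB)) :=
            mul_le_mul_of_nonneg_right h2 h3
          nlinarith [h4, h5]
        have hsum := Finset.sum_le_sum hterm
        rw [Finset.sum_sub_distrib] at hsum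
        calc val n w xA - val n w xB
            = (∑ i ∈ Finset.range n, (w i : ℝ) * xA ^ (i + 1))
              - ∑ i ∈ Finset.range n, (w i : ℝ) * xB ^ (i + 1) := rfl
          _ ≤ ∑ i ∈ Finset.range n, (xA - xB) * (w 0 : ℝ) * (((i : ℝ) + 1) * xA ^ i) := hsum
          _ = (xA - xB) * (w 0 : ℝ) * ∑ i ∈ Finset.range n, ((i : ℝ) + 1) * xA ^ i := by
              rw [Finset.mul_sum]
      have hxABid : xA - xB = (xB⁻¹ - xA⁻¹) * xA * xB := by
        field_simp
      have hfinal : (xA⁻¹ - 1) ^ 2 / xA⁻¹ * xB ^ n *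
            (val (k - t) (fun j => w (t + j)) xB + xB ^ (k - t)) ≤ xB⁻¹ - xA⁻¹ := by
        rw [mul_assoc, hid]
        have hCid : (xA⁻¹ - 1) ^ 2 / xA⁻¹ = (1 - xA) ^ 2 / xA := by
          rw [div_eq_div_iff (by positivity) (by positivity)]
          field_simp
        rw [hCid]
        have hone : (1:ℝ) - val n w xB = val n w xA - val n w xB := by rw [hxAroot]
        rw [hone]
        have hBA' : (0:ℝ) ≤ xA - xB := by linarith
        have hw00 : (0:ℝ) ≤ (w 0 : ℝ) := Nat.cast_nonneg _
        have h1x : (0:ℝ) < 1 - xA := by linarith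
        calc (1 - xA) ^ 2 / xA * (val n w xA - val n w xB)
            ≤ (1 - xA) ^ 2 / xA *
              ((xA - xB) * (w 0 : ℝ) * ∑ i ∈ Finset.range n, ((i : ℝ) + 1) * xA ^ i) := by
              apply mul_le_mul_of_nonneg_left hdiff (by positivity)
          _ ≤ (1 - xA) ^ 2 / xA * ((xA - xB) * (w 0 : ℝ) * (1 / (1 - xA) ^ 2)) := by
              apply mul_le_mul_of_nonneg_left _ (by positivity)
              apply mul_le_mul_of_nonneg_left hSn (by positivity)
          _ = (xA - xB) * (w 0 : ℝ) / xA := by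
              field_simp
          _ = (xB⁻¹ - xA⁻¹) * ((w 0 : ℝ) * xB) := by
              rw [hxABid]
              field_simp
          _ ≤ (xB⁻¹ - xA⁻¹) * 1 := by
              apply mul_le_mul_of_nonneg_left _ (by linarith)
              calc (w 0 : ℝ) * xB ≤ (w 0 : ℝ) * xA :=
                    mul_le_mul_of_nonneg_left hBA.le hw00
                _ ≤ 1 := hw0xA
          _ = xB⁻¹ - xA⁻¹ := mul_one _
      calc (A - 1) ^ 2 / A * B ^ (-(n : ℤ)) *
            ((∑ j ∈ Finset.range (k - t), (w (t + j) : ℝ) / B ^ (j + 1)) + 1 / B ^ (k - t))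
          ≤ (xA⁻¹ - 1) ^ 2 / xA⁻¹ * xB ^ n *
            (val (k - t) (fun j => w (t + j)) xB + xB ^ (k - t)) := step1
        _ ≤ xB⁻¹ - xA⁻¹ := hfinal
        _ ≤ Metric.diam (cylP n w) := hdiam
  · -- w 0 = 0 : cylinder empty
    have hempty : cylP n w = ∅ := by
      ext β
      simp only [cylP, Set.mem_setOf_eq, Set.mem_empty_iff_false, iff_false, not_and]
      intro hβ hdig
      have h0 := hdig 0 (by omega)
      unfold epsDig at h0
      simp only [Function.iterate_zero, id_eq, mul_one] at h0
      have hfl1 : (1:ℤ) ≤ ⌊β⌋ := Int.le_floor.mpr (by exact_mod_cast hβ.le)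
      omega
    rw [hempty, Real.sInf_empty, Real.sSup_empty, Metric.diam_empty]
    rw [div_zero, zero_mul, zero_mul]



end CLLB

/-- Theorem 3.8. Let `w = (ε_1,…,ε_n)` be self-admissible with
`τ(w) = k`, and let `β₀, β₁` be the endpoints of `I_n^P(w)`; set
`C = (β₀-1)²/β₀`. If `k = n` then `|I_n^P(w)| ≥ C β₁^{-n}`; if `k < n`, with
`l` such that `lk < n ≤ (l+1)k` and `t = n - lk`, one has
`|I_n^P(w)| ≥ C β₁^{-n} (ε_{t+1}/β₁ + … + (ε_k+1)/β₁^{k-t})`. -/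
theorem cylinder_length_lower_bound (n k : ℕ) (hn : 1 ≤ n) (w : ℕ → ℕ)
    (hw : SelfAdmissible n w) (hk : recTime n w = k) :
    (k = n →
      ((sInf (cylP n w) - 1) ^ 2 / sInf (cylP n w)) * sSup (cylP n w) ^ (-(n : ℤ)) ≤
        Metric.diam (cylP n w)) ∧
    (k < n → ∀ l t : ℕ, l * k < n → n ≤ (l + 1) * k → t = n - l * k →
      ((sInf (cylP n w) - 1) ^ 2 / sInf (cylP n w)) * sSup (cylP n w) ^ (-(n : ℤ)) *
          ((∑ j ∈ Finset.range (k - t), (w (t + j) : ℝ) / sSup (cylP n w) ^ (j + 1)) +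
            1 / sSup (cylP n w) ^ (k - t)) ≤
        Metric.diam (cylP n w)) := by
  constructor
  · intro hkn
    subst hkn
    have h := CLLB.key k k 0 k w hn hw hk (by omega) (by omega) (by omega)
    simpa using h
  · intro _ l t hl hl2 ht
    exact CLLB.key n k l t w hn hw hk hl hl2 ht
end

section
/- Let w_1, w_2 be two self-admissible words of length n with w_2 ≺ w_1, such that w_2 is the immediate lexicographic predecessor of w_1 among self-admissible words of length n (there is no self-admissible word of length n strictly between w_2 and w_1). If τ(w_1) < n, then τ(w_2) > τ(w_1). -/
open Filter MeasureTheory Set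
open scoped ENNReal

/-- To prove `wordLexLe`, it suffices to check that at the first position of
difference (if any), the left word is at most the right word. -/
lemma wordLexLe_of_min (m : ℕ) (a b : ℕ → ℕ)
    (h : ∀ r < m, (∀ j < r, a j = b j) → a r ≤ b r) : wordLexLe m a b := by
  classical
  by_cases heq : ∀ j < m, a j = b j
  · exact Or.inr heq
  · push_neg at heq
    obtain ⟨j₀, hj₀, hne₀⟩ := heq
    have hex : ∃ j, j < m ∧ a j ≠ b j := ⟨j₀, hj₀, hne₀⟩
    set r := Nat.find hex with hrdef
    obtain ⟨hrm, hrne⟩ := Nat.find_spec hex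
    have hmin : ∀ j < r, a j = b j := by
      intro j hj
      have h' := Nat.find_min hex hj
      push_neg at h'
      exact h' (lt_trans hj hrm)
    exact Or.inl ⟨r, hrm, hmin, lt_of_le_of_ne (h r hrm hmin) hrne⟩

/-- Proposition 3.10. Let `w₁, w₂` be self-admissible words of
length `n` with `w₂ ≺ w₁` and `w₂` the immediate lexicographic predecessor of `w₁`
among self-admissible words of length `n`. If `τ(w₁) < n`, then `τ(w₂) > τ(w₁)`. -/
theorem recTime_of_predecessor (n : ℕ) (w₁ w₂ : ℕ → ℕ)
    (h1 : SelfAdmissible n w₁) (h2 : SelfAdmissible n w₂)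
    (hlt : wordLexLt n w₂ w₁)
    (hadj : ¬ ∃ v : ℕ → ℕ, SelfAdmissible n v ∧ wordLexLt n w₂ v ∧ wordLexLt n v w₁)
    (hτ : recTime n w₁ < n) :
    recTime n w₁ < recTime n w₂ := by
  classical
  by_contra hle
  push_neg at hle
  set k := recTime n w₁ with hk
  set t := recTime n w₂ with ht
  -- k is a genuine recurrence of w₁
  have hkmem : k ∈ ({i | 1 ≤ i ∧ i < n ∧ ∀ j < n - i, w₁ (i + j) = w₁ j} ∪ {n} : Set ℕ) := by
    rw [hk, recTime]
    exact Nat.sInf_mem ⟨n, Or.inr rfl⟩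
  have hkrec : 1 ≤ k ∧ k < n ∧ ∀ j < n - k, w₁ (k + j) = w₁ j := by
    rcases hkmem with h | h
    · exact h
    · simp only [Set.mem_singleton_iff] at h
      omega
  -- t ≤ k < n, so t is a genuine recurrence of w₂
  have htmem : t ∈ ({i | 1 ≤ i ∧ i < n ∧ ∀ j < n - i, w₂ (i + j) = w₂ j} ∪ {n} : Set ℕ) := by
    rw [ht, recTime]
    exact Nat.sInf_mem ⟨n, Or.inr rfl⟩
  have htrec : 1 ≤ t ∧ t < n ∧ ∀ j < n - t, w₂ (t + j) = w₂ j := by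
    rcases htmem with h | h
    · exact h
    · simp only [Set.mem_singleton_iff] at h
      omega
  obtain ⟨ht1, htn, hper₂⟩ := htrec
  obtain ⟨hk1, hkn, hper₁⟩ := hkrec
  -- first difference position p
  obtain ⟨p, hpn, hpeq, hplt⟩ := hlt
  -- the word v₀ = (w₁ 0, …, w₁ p, 0, 0, …)
  set v₀ : ℕ → ℕ := fun j => if j ≤ p then w₁ j else 0 with hv₀
  have hv₀p : v₀ p = w₁ p := by simp [hv₀]
  have hv₀eq : ∀ j ≤ p, v₀ j = w₁ j := by
    intro j hj; simp [hv₀, hj]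
  have hv₀0 : ∀ j, p < j → v₀ j = 0 := by
    intro j hj; simp [hv₀, Nat.not_le.mpr hj]
  -- v₀ is self-admissible
  have hv₀adm : SelfAdmissible n v₀ := by
    intro i hi
    apply wordLexLe_of_min
    intro r hr hre
    by_contra hgt
    push_neg at hgt
    -- hgt : v₀ r < v₀ (i + r), so v₀ (i+r) > 0, hence i + r ≤ p
    have hirp : i + r ≤ p := by
      by_contra h'
      push_neg at h'
      rw [hv₀0 _ h'] at hgt
      omega
    have hrp : r ≤ p := le_trans (Nat.le_add_left r i) hirp
    rw [hv₀eq _ hirp, hv₀eq _ hrp] at hgt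
    -- hgt : w₁ r < w₁ (i + r), contradicting self-admissibility of w₁
    rcases h1 i hi with ⟨r', hr', hre', hlt'⟩ | heq
    · have hre'' : ∀ j < r', w₁ (i + j) = w₁ j := hre'
      have hl'' : w₁ (i + r') < w₁ r' := hlt'
      rcases lt_trichotomy r' r with hc | hc | hc
      · have := hre r' hc
        rw [hv₀eq _ (by omega), hv₀eq _ (by omega)] at this
        omega
      · subst hc; omega
      · have := hre'' r hc
        omega
    · have heq' : ∀ j < n - i, w₁ (i + j) = w₁ j := heq
      have := heq' r hr
      omega
  -- w₂ ≺ v₀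
  have hw₂v₀ : wordLexLt n w₂ v₀ := by
    refine ⟨p, hpn, ?_, ?_⟩
    · intro j hj
      rw [hv₀eq _ (le_of_lt hj)]
      exact hpeq j hj
    · rw [hv₀p]; exact hplt
  -- adjacency: v₀ is not strictly below w₁
  have hnot : ¬ wordLexLt n v₀ w₁ := fun h => hadj ⟨v₀, hv₀adm, hw₂v₀, h⟩
  -- Fact 1 : w₁ vanishes after p
  have fact1 : ∀ j, p < j → j < n → w₁ j = 0 := by
    by_contra hbad
    push_neg at hbad
    obtain ⟨j₁, hj₁p, hj₁n, hj₁ne⟩ := hbad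
    have hex : ∃ j, p < j ∧ j < n ∧ w₁ j ≠ 0 := ⟨j₁, hj₁p, hj₁n, hj₁ne⟩
    set j₀ := Nat.find hex with hj₀def
    obtain ⟨hj₀p, hj₀n, hj₀ne⟩ := Nat.find_spec hex
    apply hnot
    refine ⟨j₀, hj₀n, ?_, ?_⟩
    · intro s hs
      by_cases hsp : s ≤ p
      · exact hv₀eq s hsp
      · push_neg at hsp
        have h' := Nat.find_min hex hs
        push_neg at h'
        rw [hv₀0 s hsp, h' hsp (lt_trans hs hj₀n)]
    · rw [hv₀0 _ hj₀p]
      exact Nat.pos_of_ne_zero hj₀ne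
  -- case analysis on t vs p
  rcases le_or_gt t p with htp | hpt
  · -- t ≤ p : contradiction with self-admissibility of w₁ at shift t
    have e1 : ∀ s, s < p - t → w₁ (t + s) = w₁ s := by
      intro s hs
      have h₁ : w₁ (t + s) = w₂ (t + s) := (hpeq (t + s) (by omega)).symm
      have h₂ : w₂ (t + s) = w₂ s := hper₂ s (by omega)
      have h₃ : w₂ s = w₁ s := hpeq s (by omega)
      rw [h₁, h₂, h₃]
    have e2 : w₁ (p - t) < w₁ p := by
      have h₁ : w₁ (p - t) = w₂ (p - t) := (hpeq (p - t) (by omega)).symm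
      have h₂ : w₂ (p - t) = w₂ p := by
        have := hper₂ (p - t) (by omega)
        rw [show t + (p - t) = p by omega] at this
        exact this.symm
      omega
    have e3 : w₁ (t + (p - t)) = w₁ p := by rw [show t + (p - t) = p by omega]
    rcases h1 t htn with ⟨r, hr, hre, hlt'⟩ | heq
    · have hre'' : ∀ j < r, w₁ (t + j) = w₁ j := hre
      have hl'' : w₁ (t + r) < w₁ r := hlt'
      rcases lt_trichotomy r (p - t) with hc | hc | hc
      · have := e1 r hc
        omega
      · subst hc
        omega
      · have := hre'' (p - t) hc
        omega
    · have heq' : ∀ j < n - t, w₁ (t + j) = w₁ j := heq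
      have := heq' (p - t) (by omega)
      omega
  · -- p < t ≤ k : then w₁ 0 = w₁ k = 0, contradicting shift p
    have hpk : p < k := lt_of_lt_of_le hpt hle
    have hw₁k : w₁ k = 0 := fact1 k hpk hkn
    have hw₁0 : w₁ 0 = 0 := by
      have := hper₁ 0 (by omega)
      rw [Nat.add_zero] at this
      omega
    have hw₁p : 0 < w₁ p := by omega
    rcases h1 p hpn with ⟨r, hr, hre, hlt'⟩ | heq
    · have hre'' : ∀ j < r, w₁ (p + j) = w₁ j := hre
      have hl'' : w₁ (p + r) < w₁ r := hlt'
      rcases Nat.eq_zero_or_pos r with hc | hc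
      · subst hc
        rw [Nat.add_zero] at hl''
        omega
      · have := hre'' 0 hc
        rw [Nat.add_zero] at this
        omega
    · have heq' : ∀ j < n - p, w₁ (p + j) = w₁ j := heq
      have := heq' 0 (by omega)
      rw [Nat.add_zero] at this
      omega
end

section
/- Let w_1 ≻ w_2 ≻ … ≻ w_n be n self-admissible words of length n which are consecutive in the lexicographic order, i.e. for each 1 ≤ i < n, the word w_{i+1} is the immediate lexicographic predecessor of w_i among self-admissible words of length n. Then at least one of the words w_1,…,w_n has full recurrence time, i.e. τ(w_i) = n for some i. -/
open Filter MeasureTheory Set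
open scoped ENNReal

section Aux

lemma zero_wordLexLe {m : ℕ} {a b : ℕ → ℕ} (h : ∀ j < m, a j = 0) : wordLexLe m a b := by
  classical
  by_cases hall : ∀ j < m, b j = 0
  · exact Or.inr fun j hj => (h j hj).trans (hall j hj).symm
  · push_neg at hall
    obtain ⟨j, hj, hbj⟩ := hall
    have hex : ∃ j, j < m ∧ b j ≠ 0 := ⟨j, hj, hbj⟩
    left
    refine ⟨Nat.find hex, (Nat.find_spec hex).1, ?_, ?_⟩
    · intro j' hj'
      have hj'm : j' < m := hj'.trans (Nat.find_spec hex).1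
      have hmin := Nat.find_min hex hj'
      push_neg at hmin
      exact (h j' hj'm).trans (hmin hj'm).symm
    · have h1 := (Nat.find_spec hex).2
      have h0 := h _ (Nat.find_spec hex).1
      omega

lemma wordLexLe_or_gt (m : ℕ) (a b : ℕ → ℕ) : wordLexLe m a b ∨ wordLexLt m b a := by
  classical
  by_cases hall : ∀ j < m, a j = b j
  · exact Or.inl (Or.inr hall)
  · push_neg at hall
    have hex : ∃ j, j < m ∧ a j ≠ b j := by
      obtain ⟨j, hj, h⟩ := hall; exact ⟨j, hj, h⟩
    have hspec := Nat.find_spec hex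
    have hmin : ∀ j < Nat.find hex, a j = b j := by
      intro j hj
      have hjm : j < m := hj.trans hspec.1
      have := Nat.find_min hex hj
      push_neg at this
      exact this hjm
    rcases lt_or_gt_of_ne hspec.2 with h | h
    · exact Or.inl (Or.inl ⟨Nat.find hex, hspec.1, hmin, h⟩)
    · exact Or.inr ⟨Nat.find hex, hspec.1, fun j hj => (hmin j hj).symm, h⟩

lemma wordLexLe_lt_asymm {m : ℕ} {a b : ℕ → ℕ} (h1 : wordLexLe m a b)
    (h2 : wordLexLt m b a) : False := by
  obtain ⟨k, hkm, hke, hklt⟩ := h2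
  rcases h1 with ⟨k', hk'm, hk'e, hk'lt⟩ | heq
  · rcases lt_trichotomy k k' with h | h | h
    · have := hk'e k h; omega
    · subst h; omega
    · have := hke k' h; omega
  · have := heq k hkm; omega

lemma selfAdm_le_head {n : ℕ} {w : ℕ → ℕ} (hw : SelfAdmissible n w) {i : ℕ} (hi : i < n) :
    w i ≤ w 0 := by
  rcases hw i hi with ⟨k, hkm, hke, hklt⟩ | heq
  · rcases Nat.eq_zero_or_pos k with rfl | hk
    · simpa using hklt.le
    · have := hke 0 hk; simp at this; omega
  · have := heq 0 (by omega); simp at this; omega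

lemma period_mod {n k : ℕ} {P : ℕ → ℕ} (hk : 1 ≤ k)
    (hper : ∀ j < n - k, P (k + j) = P j) : ∀ j < n, P j = P (j % k) := by
  intro j
  induction j using Nat.strong_induction_on with
  | _ j ih =>
    intro hj
    by_cases hjk : j < k
    · rw [Nat.mod_eq_of_lt hjk]
    · push_neg at hjk
      have h1 : P j = P (j - k) := by
        have hlt : j - k < n - k := by omega
        have := hper (j - k) hlt
        rw [Nat.add_sub_cancel' hjk] at this
        exact this
      have h2 := ih (j - k) (by omega) (by omega)
      have h3 : (j - k) % k = j % k := by
        conv_rhs => rw [← Nat.sub_add_cancel hjk]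
        rw [Nat.add_mod_right]
      rw [h1, h2, h3]

lemma climb {n k : ℕ} {P : ℕ → ℕ} (hk : 1 ≤ k)
    (hper : ∀ j < n - k, P (k + j) = P j) :
    ∀ m q, n - q ≤ m → q < n → P q ≠ 0 → ∃ p, n - k ≤ p ∧ p < n ∧ P p ≠ 0 := by
  intro m
  induction m with
  | zero => intro q h hq _; omega
  | succ m ih =>
    intro q h hq hq0
    by_cases hcase : n - k ≤ q
    · exact ⟨q, hcase, hq, hq0⟩
    · push_neg at hcase
      have hne : P (k + q) ≠ 0 := by rw [hper q hcase]; exact hq0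
      exact ih (k + q) (by omega) (by omega) hne

lemma decrement_lemma {n : ℕ} {w : ℕ → ℕ} (hw : SelfAdmissible n w) {p : ℕ}
    (hpn : p < n) (hp0 : w p ≠ 0) (hz : ∀ j, p < j → j < n → w j = 0) :
    ∃ v : ℕ → ℕ, SelfAdmissible n v ∧ wordLexLt n v w ∧ ∀ j < p, v j = w j := by
  classical
  set v : ℕ → ℕ := fun j => if j = p then w p - 1 else w j with hv
  have hvp : v p = w p - 1 := by simp [hv]
  have hvne : ∀ j, j ≠ p → v j = w j := by intro j hj; simp [hv, hj]
  have hvltw : wordLexLt n v w := by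
    refine ⟨p, hpn, fun j hj => hvne j (by omega), ?_⟩
    rw [hvp]; omega
  refine ⟨v, ?_, hvltw, fun j hj => hvne j (by omega)⟩
  intro s hs
  rcases Nat.eq_zero_or_pos s with rfl | hs1
  · exact Or.inr fun j hj => by simp
  by_cases hsp : p < s
  · apply zero_wordLexLe
    intro j hj
    rw [hvne (s + j) (by omega)]
    exact hz _ (by omega) (by omega)
  push_neg at hsp
  rcases hw s hs with ⟨j0, hj0m, hj0e, hj0lt⟩ | heq
  · simp only at hj0lt hj0e
    by_cases hcmp : j0 < p - s
    · left
      refine ⟨j0, hj0m, ?_, ?_⟩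
      · intro j hj
        show v (s + j) = v j
        rw [hvne (s + j) (by omega), hvne j (by omega)]
        exact hj0e j hj
      · show v (s + j0) < v j0
        rw [hvne (s + j0) (by omega), hvne j0 (by omega)]
        exact hj0lt
    · push_neg at hcmp
      left
      refine ⟨p - s, by omega, ?_, ?_⟩
      · intro j hj
        show v (s + j) = v j
        rw [hvne (s + j) (by omega), hvne j (by omega)]
        exact hj0e j (by omega)
      · have hspp : s + (p - s) = p := by omega
        show v (s + (p - s)) < v (p - s)
        rw [hspp, hvp, hvne (p - s) (by omega)]
        rcases eq_or_lt_of_le hcmp with h | h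
        · have h2 := hj0lt
          rw [← h, hspp] at h2
          omega
        · have h2 := hj0e (p - s) h
          rw [hspp] at h2
          omega
  · simp only at heq
    left
    refine ⟨p - s, by omega, ?_, ?_⟩
    · intro j hj
      show v (s + j) = v j
      rw [hvne (s + j) (by omega), hvne j (by omega)]
      exact heq j (by omega)
    · have hspp : s + (p - s) = p := by omega
      have h2 := heq (p - s) (by omega)
      rw [hspp] at h2
      show v (s + (p - s)) < v (p - s)
      rw [hspp, hvp, hvne (p - s) (by omega)]
      omega

lemma period_max {n k : ℕ} {P u : ℕ → ℕ} (hk : 1 ≤ k) (hkn : k < n)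
    (hper : ∀ j < n - k, P (k + j) = P j)
    (hu : SelfAdmissible n u) (hagree : ∀ j < k, u j = P j) :
    wordLexLe n u P := by
  classical
  rcases wordLexLe_or_gt n u P with h | h
  · exact h
  exfalso
  obtain ⟨i, hin, hie, hilt⟩ := h
  have hmod := period_mod hk hper
  have hik : k ≤ i := by
    by_contra hik
    push_neg at hik
    have h1 := hagree i hik
    omega
  set r := i % k with hr
  set s := k * (i / k) with hs
  have hsr : s + r = i := Nat.div_add_mod i k
  have hrk : r < k := Nat.mod_lt _ (by omega)
  have hsn : s < n := by omega
  have hkey : ∀ j, j < r → u (s + j) = u j := by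
    intro j hj
    have hji : s + j < i := by omega
    have hjn : s + j < n := by omega
    have h3 : (s + j) % k = j := by
      rw [hs, Nat.mul_add_mod]; exact Nat.mod_eq_of_lt (by omega)
    calc u (s + j) = P (s + j) := (hie _ hji).symm
      _ = P ((s + j) % k) := hmod _ hjn
      _ = P j := by rw [h3]
      _ = u j := (hagree j (by omega)).symm
  have hur : u r < u (s + r) := by
    have h1 : P i = P r := by
      have := hmod i hin
      rw [← hr] at this
      exact this
    have h2 : u r = P r := hagree r hrk
    rw [hsr]
    omega
  exact wordLexLe_lt_asymm (hu s hsn) ⟨r, by omega, fun j hj => (hkey j hj).symm, hur⟩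

lemma squeeze_agree {m : ℕ} {a b c : ℕ → ℕ} (h1 : wordLexLe m a b) (h2 : wordLexLt m b c)
    {p : ℕ} (hagree : ∀ j < p, a j = c j) : ∀ j < p, b j = c j := by
  obtain ⟨k, hkm, hke, hklt⟩ := h2
  have hkp : p ≤ k := by
    by_contra hkp
    push_neg at hkp
    rcases h1 with ⟨q, hqm, hqe, hqlt⟩ | heq
    · rcases lt_trichotomy q k with h | h | h
      · have e1 := hke q h
        have e2 := hagree q (by omega)
        omega
      · subst h
        have e2 := hagree q (by omega)
        omega
      · have e1 := hqe k h
        have e2 := hagree k hkp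
        omega
    · have e1 := heq k hkm
      have e2 := hagree k hkp
      omega
  intro j hj
  exact hke j (by omega)

lemma recTime_spec (n : ℕ) (w : ℕ → ℕ) :
    recTime n w = n ∨ (1 ≤ recTime n w ∧ recTime n w < n ∧
      ∀ j < n - recTime n w, w (recTime n w + j) = w j) := by
  have hne : ({k | 1 ≤ k ∧ k < n ∧ ∀ j < n - k, w (k + j) = w j} ∪ {n} : Set ℕ).Nonempty :=
    ⟨n, Or.inr rfl⟩
  have hmem : recTime n w ∈ ({k | 1 ≤ k ∧ k < n ∧ ∀ j < n - k, w (k + j) = w j} ∪ {n} : Set ℕ) :=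
    Nat.sInf_mem hne
  rw [Set.mem_union] at hmem
  rcases hmem with h | h
  · exact Or.inr h
  · exact Or.inl h

end Aux

/-- Corollary 3.11. Among any `n` consecutive (in the
lexicographic order) self-admissible words of length `n`, at least one has full
recurrence time. -/
theorem exists_full_recTime (n : ℕ) (hn : 1 ≤ n) (w : ℕ → ℕ → ℕ)
    (hadm : ∀ i < n, SelfAdmissible n (w i))
    (hcons : ∀ i, i + 1 < n → wordLexLt n (w (i + 1)) (w i) ∧
      ¬ ∃ v : ℕ → ℕ, SelfAdmissible n v ∧
        wordLexLt n (w (i + 1)) v ∧ wordLexLt n v (w i)) :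
    ∃ i < n, recTime n (w i) = n := by
  classical
  by_contra hfull
  push_neg at hfull
  -- every word has recurrence time < n, i.e. a genuine period
  have hτ : ∀ i < n, 1 ≤ recTime n (w i) ∧ recTime n (w i) < n ∧
      ∀ j < n - recTime n (w i), w i (recTime n (w i) + j) = w i j := by
    intro i hi
    rcases recTime_spec n (w i) with h | h
    · exact absurd h (hfull i hi)
    · exact h
  -- n = 1 is impossible: recTime 1 (w 0) would satisfy 1 ≤ r < 1
  have hn2 : 2 ≤ n := by
    rcases Nat.lt_or_ge n 2 with h | h
    · have := hτ 0 (by omega)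
      omega
    · exact h
  -- first difference of the pair (w i, w (i+1))
  have pairD : ∀ i, i + 1 < n → ∃ d, d < n ∧ (∀ j < d, w (i + 1) j = w i j) ∧
      w (i + 1) d < w i d := by
    intro i hi
    obtain ⟨⟨d, hd, he, hlt⟩, -⟩ := hcons i hi
    exact ⟨d, hd, he, hlt⟩
  -- F1: any first difference is < recTime of the lower word
  have F1 : ∀ i, i + 1 < n → ∀ d, d < n → (∀ j < d, w (i + 1) j = w i j) →
      w (i + 1) d < w i d → d < recTime n (w (i + 1)) := by
    intro i hi d hdn he hlt
    by_contra hge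
    push_neg at hge
    obtain ⟨hℓ1, hℓn, hper⟩ := hτ (i + 1) hi
    have hag : ∀ j < recTime n (w (i + 1)), w i j = w (i + 1) j :=
      fun j hj => (he j (by omega)).symm
    have hle := period_max hℓ1 hℓn hper (hadm i (by omega)) hag
    exact wordLexLe_lt_asymm hle ⟨d, hdn, he, hlt⟩
  -- last nonzero position of w i (for i with a successor pair)
  have lastNZ : ∀ i, i + 1 < n → ∃ p, p < n ∧ w i p ≠ 0 ∧
      ∀ j, p < j → j < n → w i j = 0 := by
    intro i hi
    obtain ⟨d, hdn, he, hlt⟩ := pairD i hi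
    have hne : w i d ≠ 0 := by omega
    refine ⟨Nat.findGreatest (fun j => w i j ≠ 0) (n - 1), ?_, ?_, ?_⟩
    · have := Nat.findGreatest_le (P := fun j => w i j ≠ 0) (n - 1)
      omega
    · exact Nat.findGreatest_spec (P := fun j => w i j ≠ 0) (by omega : d ≤ n - 1) hne
    · intro j hj hjn
      by_contra hj0
      exact Nat.findGreatest_is_greatest (P := fun j => w i j ≠ 0) hj (by omega : j ≤ n - 1) hj0
  -- the lower word agrees with the upper word below the upper word's last nonzero position
  have agree_last : ∀ i, i + 1 < n → ∀ p, p < n → w i p ≠ 0 →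
      (∀ j, p < j → j < n → w i j = 0) → ∀ j < p, w (i + 1) j = w i j := by
    intro i hi p hpn hp0 hz
    obtain ⟨v, hvadm, hvlt, hvagree⟩ := decrement_lemma (hadm i (by omega)) hpn hp0 hz
    obtain ⟨hlt_pair, hno⟩ := hcons i hi
    have hvle : wordLexLe n v (w (i + 1)) := by
      rcases wordLexLe_or_gt n v (w (i + 1)) with h | h
      · exact h
      · exact absurd ⟨v, hvadm, h, hvlt⟩ hno
    exact squeeze_agree hvle hlt_pair hvagree
  -- hence the first difference is ≥ the last nonzero position
  have lowerD : ∀ i, i + 1 < n → ∀ p, p < n → w i p ≠ 0 →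
      (∀ j, p < j → j < n → w i j = 0) →
      ∀ d, d < n → (∀ j < d, w (i + 1) j = w i j) → w (i + 1) d < w i d → p ≤ d := by
    intro i hi p hpn hp0 hz d hdn he hlt
    by_contra hpd
    push_neg at hpd
    have := agree_last i hi p hpn hp0 hz d hpd
    omega
  -- main induction: the first difference of pair i is at least i + 1
  have key : ∀ i, i + 1 < n → ∀ d, d < n → (∀ j < d, w (i + 1) j = w i j) →
      w (i + 1) d < w i d → i + 1 ≤ d := by
    intro i
    induction i with
    | zero =>
      intro hi d hdn he hlt
      -- last nonzero position of w 0 is ≥ n - recTime n (w 0) ≥ 1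
      obtain ⟨p, hpn, hp0, hz⟩ := lastNZ 0 hi
      obtain ⟨hℓ1, hℓn, hper⟩ := hτ 0 (by omega)
      obtain ⟨p', hp'1, hp'n, hp'0⟩ := climb hℓ1 hper n p (by omega) hpn hp0
      have hp'p : p' ≤ p := by
        by_contra hc
        push_neg at hc
        exact hp'0 (hz p' hc hp'n)
      have := lowerD 0 hi p hpn hp0 hz d hdn he hlt
      omega
    | succ i ih =>
      intro hi d hdn he hlt
      have hi' : i + 1 < n := by omega
      obtain ⟨d0, hd0n, he0, hlt0⟩ := pairD i hi'
      have hd0 : i + 1 ≤ d0 := ih hi' d0 hd0n he0 hlt0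
      -- last nonzero position p of w (i+1)
      obtain ⟨p, hpn, hp0, hz⟩ := lastNZ (i + 1) hi
      have hpd : p ≤ d := lowerD (i + 1) hi p hpn hp0 hz d hdn he hlt
      -- claim : d0 < p
      have hd0p : d0 < p := by
        by_contra hc
        push_neg at hc  -- p ≤ d0
        obtain ⟨hℓ1, hℓn, hper⟩ := hτ (i + 1) hi'
        have hd0ℓ : d0 < recTime n (w (i + 1)) := F1 i hi' d0 hd0n he0 hlt0
        -- w (i+1) vanishes beyond d0
        have hzd : ∀ j, d0 < j → j < n → w (i + 1) j = 0 :=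
          fun j hj hjn => hz j (by omega) hjn
        -- hence w (i+1) vanishes on [0, n - ℓ)
        have hz2 : ∀ j, j < n - recTime n (w (i + 1)) → w (i + 1) j = 0 := by
          intro j hj
          have := hper j hj
          rw [← this]
          exact hzd _ (by omega) (by omega)
        rcases Nat.lt_or_ge d0 (n - recTime n (w (i + 1))) with hcase | hcase
        · -- w (i+1) is identically zero, contradicting w (i+2) ≺ w (i+1)
          have hall : ∀ j < n, w (i + 1) j = 0 := by
            intro j hjn
            rcases Nat.lt_or_ge j (n - recTime n (w (i + 1))) with h | h
            · exact hz2 j h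
            · exact hzd j (by omega) hjn
          exact absurd (hall d hdn) (by omega)
        · -- w i starts with 0 but has a positive digit at d0: contradiction
          have h00 : w (i + 1) 0 = 0 := hz2 0 (by omega)
          have h0i : w i 0 = 0 := by
            have := he0 0 (by omega)
            omega
          have hpos : 1 ≤ w i d0 := by omega
          have := selfAdm_le_head (hadm i (by omega)) hd0n
          omega
      omega
  -- conclusion: the pair (n-2, n-1) gives a contradiction
  obtain ⟨d, hdn, he, hlt⟩ := pairD (n - 2) (by omega)
  have h1 := key (n - 2) (by omega) d hdn he hlt
  have h2 := F1 (n - 2) (by omega) d hdn he hlt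
  have h3 := hτ (n - 2 + 1) (by omega)
  omega
end

section
/- Let 1 < β_0 < β_1 be such that the β_0-expansion of 1 and the β_1-expansion of 1 each have infinitely many nonzero digits, let M = min{n ≥ 1 : ε_n(1,β_0) ≠ ε_n(1,β_1)}, and let β_2 = sup I_M^P(ε_1(1,β_0),…,ε_M(1,β_0)) be the right endpoint of the parameter cylinder of (ε_1(1,β_0),…,ε_M(1,β_0)). Then for every infinite sequence w ∈ S_{β_2}, the infinite sequence ε = (ε_1(1,β_1),…,ε_M(1,β_1), 0^M, w) (the first M digits of the β_1-expansion of 1, followed by M zeros, followed by w) is self-admissible, i.e. σ^i ε ≺ ε for all i ≥ 1. -/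
open Filter MeasureTheory Set
open scoped ENNReal

/-!
Shifts by `1 ≤ i ≤ m` are settled inside the prefix by the self-admissibility of `ε(1,β₁)`, or
by the nonzero digit `ε_{m+1}(1,β₁) > ε_{m+1}(1,β₀)` once the shifted prefix meets the zeros;
shifts into the zeros start with `0`. A shift by `i ≥ 2(m+1)` is a shift of `w`, hence
`⪯ ε*(1,β₂)`, and the point is that `ε*(1,β₂)` does not exceed `ε(1,β₀)` on its first `m+1`
digits. Indeed `β₂` lies in the closure of the cylinder, so the bounds `β T_β^k 1 < ε_k + 1`
valid on the cylinder survive as `≤` at `β₂`, whereas the remainders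
`β₂^k (1 - ∑_{j<k} ε*_j β₂^{-j-1})` of the quasi-greedy expansion `ε*(1,β₂)` are all positive.
-/

lemma betaT_eq_fract (β x : ℝ) : betaT β x = Int.fract (β * x) := rfl

lemma betaT_iterate_nonneg (β : ℝ) (n : ℕ) : 0 ≤ (betaT β)^[n] 1 := by
  cases n with
  | zero => exact zero_le_one
  | succ n => rw [Function.iterate_succ_apply', betaT_eq_fract]; exact Int.fract_nonneg _

lemma betaT_iterate_lt_one (β : ℝ) {n : ℕ} (hn : n ≠ 0) : (betaT β)^[n] 1 < 1 := by
  obtain ⟨n, rfl⟩ := Nat.exists_eq_succ_of_ne_zero hn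
  rw [Function.iterate_succ_apply', betaT_eq_fract]
  exact Int.fract_lt_one _

lemma epsDig_cast {β : ℝ} (hβ : 0 ≤ β) (n : ℕ) :
    (epsDig β n : ℝ) = ⌊β * (betaT β)^[n] 1⌋ := by
  have hfloor : 0 ≤ ⌊β * (betaT β)^[n] 1⌋ :=
    Int.floor_nonneg.2 (mul_nonneg hβ (betaT_iterate_nonneg β n))
  rw [epsDig, ← Int.cast_natCast, Int.toNat_of_nonneg hfloor]

lemma epsDig_le_mul {β : ℝ} (hβ : 0 ≤ β) (n : ℕ) :
    (epsDig β n : ℝ) ≤ β * (betaT β)^[n] 1 :=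
  epsDig_cast hβ n ▸ Int.floor_le _

lemma mul_lt_epsDig_add_one {β : ℝ} (hβ : 0 ≤ β) (n : ℕ) :
    β * (betaT β)^[n] 1 < epsDig β n + 1 :=
  epsDig_cast hβ n ▸ Int.lt_floor_add_one _

lemma betaT_iterate_succ {β : ℝ} (hβ : 0 ≤ β) (n : ℕ) :
    (betaT β)^[n + 1] 1 = β * (betaT β)^[n] 1 - epsDig β n := by
  rw [Function.iterate_succ_apply', epsDig_cast hβ]; rfl

lemma epsDig_zero_pos {β : ℝ} (hβ : 1 < β) : 0 < epsDig β 0 := by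
  have h := mul_lt_epsDig_add_one (zero_le_one.trans hβ.le) 0
  rw [Function.iterate_zero_apply, mul_one] at h
  exact Nat.lt_add_one_iff.1 (by exact_mod_cast (by linarith : (1 : ℝ) < epsDig β 0 + 1))

lemma betaT_iterate_pos_of_epsDig_ne_zero {β : ℝ} {n p : ℕ} (hnp : n ≤ p)
    (hp : epsDig β p ≠ 0) : 0 < (betaT β)^[n] 1 := by
  refine (betaT_iterate_nonneg β n).lt_of_ne' fun hzero => hp ?_
  obtain ⟨k, rfl⟩ := Nat.exists_eq_add_of_le hnp
  have hfix : (betaT β)^[k] 0 = 0 := Function.iterate_fixed (by simp [betaT]) k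
  simp [epsDig, add_comm n k, Function.iterate_add_apply, hzero, hfix]

/-- While the digits agree the same integer is subtracted, and `β ≤ γ` keeps the order. -/
lemma mul_betaT_iterate_lt {β γ : ℝ} (hβ : 0 < β) (hβγ : β ≤ γ) {i j : ℕ}
    (hbase : β * (betaT β)^[i] 1 < γ * (betaT γ)^[j] 1) :
    ∀ k, (∀ l < k, epsDig β (i + l) = epsDig γ (j + l)) →
      β * (betaT β)^[i + k] 1 < γ * (betaT γ)^[j + k] 1
  | 0, _ => hbase
  | k + 1, hagree => by
    have hγ : 0 ≤ γ := hβ.le.trans hβγ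
    have hk := mul_betaT_iterate_lt hβ hβγ hbase k fun l hl => hagree l (by omega)
    have hlt : (betaT β)^[i + k + 1] 1 < (betaT γ)^[j + k + 1] 1 := by
      rw [betaT_iterate_succ hβ.le, betaT_iterate_succ hγ, hagree k k.lt_succ_self]
      linarith
    calc β * (betaT β)^[i + k + 1] 1 < β * (betaT γ)^[j + k + 1] 1 :=
          mul_lt_mul_of_pos_left hlt hβ
      _ ≤ γ * (betaT γ)^[j + k + 1] 1 :=
          mul_le_mul_of_nonneg_right hβγ (betaT_iterate_nonneg γ _)

lemma epsDig_add_le {β γ : ℝ} (hβ : 0 < β) (hβγ : β ≤ γ) {i j k : ℕ}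
    (hbase : β * (betaT β)^[i] 1 < γ * (betaT γ)^[j] 1)
    (hagree : ∀ l < k, epsDig β (i + l) = epsDig γ (j + l)) :
    epsDig β (i + k) ≤ epsDig γ (j + k) := by
  have hchain := mul_betaT_iterate_lt hβ hβγ hbase k hagree
  have h1 := epsDig_le_mul hβ.le (i + k)
  have h2 := mul_lt_epsDig_add_one (hβ.le.trans hβγ) (j + k)
  have hlt : (epsDig β (i + k) : ℝ) < epsDig γ (j + k) + 1 := by linarith
  exact Nat.lt_succ_iff.1 (by exact_mod_cast hlt)

lemma epsDig_le_of_lt {β γ : ℝ} (hβ : 0 < β) (hβγ : β < γ) {k : ℕ}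
    (hagree : ∀ l < k, epsDig β l = epsDig γ l) : epsDig β k ≤ epsDig γ k := by
  simpa using
    epsDig_add_le (i := 0) (j := 0) hβ hβγ.le (by simpa using hβγ) (by simpa using hagree)

lemma epsDig_add_le_epsDig {β : ℝ} (hβ : 1 < β) {i k : ℕ} (hi : i ≠ 0)
    (hagree : ∀ l < k, epsDig β (i + l) = epsDig β l) : epsDig β (i + k) ≤ epsDig β k := by
  have hbase : β * (betaT β)^[i] 1 < β * (betaT β)^[0] 1 := by
    rw [Function.iterate_zero_apply]
    exact mul_lt_mul_of_pos_left (betaT_iterate_lt_one β hi) (by linarith)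
  simpa using epsDig_add_le (j := 0) (by linarith) le_rfl hbase (by simpa using hagree)

/-- `expRemainder w n β = β ^ n * (1 - ∑ j < n, w j * β ^ (-(j + 1)))`, the scaled remainder of
`1` after the first `n` digits of `w`. For `w = ε(1,β)` it is the orbit point `T_β^n 1`. -/
noncomputable def expRemainder (w : ℕ → ℕ) : ℕ → ℝ → ℝ
  | 0, _ => 1
  | n + 1, β => β * expRemainder w n β - w n

lemma continuous_expRemainder (w : ℕ → ℕ) : ∀ n, Continuous (expRemainder w n)
  | 0 => continuous_const
  | n + 1 => (continuous_id.mul (continuous_expRemainder w n)).sub continuous_const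

lemma expRemainder_congr {v w : ℕ → ℕ} {β : ℝ} :
    ∀ {n}, (∀ j < n, v j = w j) → expRemainder v n β = expRemainder w n β
  | 0, _ => rfl
  | n + 1, h => by
    rw [expRemainder, expRemainder, expRemainder_congr fun j hj => h j (by omega),
      h n n.lt_succ_self]

lemma expRemainder_eq_betaT_iterate {β : ℝ} (hβ : 0 ≤ β) {w : ℕ → ℕ} :
    ∀ {n}, (∀ j < n, epsDig β j = w j) → expRemainder w n β = (betaT β)^[n] 1
  | 0, _ => rfl
  | n + 1, h => by
    rw [expRemainder, expRemainder_eq_betaT_iterate hβ fun j hj => h j (by omega),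
      betaT_iterate_succ hβ, h n n.lt_succ_self]

lemma expRemainder_add_sub_of_periodic {w : ℕ → ℕ} {p : ℕ} (hper : ∀ j, w (p + j) = w j)
    (β : ℝ) : ∀ i, expRemainder w (p + i) β - expRemainder w i β =
      β ^ i * (expRemainder w p β - 1)
  | 0 => by simp [expRemainder]
  | i + 1 => by
    have ih := expRemainder_add_sub_of_periodic hper β i
    rw [← add_assoc, expRemainder, expRemainder, hper, pow_succ]
    linear_combination β * ih

lemma expRemainder_pos_of_periodic {w : ℕ → ℕ} {p : ℕ} {β : ℝ} (hβ : 0 ≤ β) (hp : p ≠ 0)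
    (hper : ∀ j, w (p + j) = w j) (hpos : ∀ k < p, 0 < expRemainder w k β)
    (hone : 1 ≤ expRemainder w p β) (n : ℕ) : 0 < expRemainder w n β := by
  induction n using Nat.strong_induction_on with
  | _ n ih =>
    obtain hn | hn := lt_or_ge n p
    · exact hpos n hn
    obtain ⟨i, rfl⟩ := Nat.exists_eq_add_of_le hn
    have hshift := expRemainder_add_sub_of_periodic hper β i
    have hi := ih i (by omega)
    nlinarith [pow_nonneg hβ i]

lemma exists_last_ne_zero {f : ℕ → ℕ} {a N : ℕ} (ha : f a ≠ 0) (hN : ∀ i ≥ N, f i = 0) :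
    ∃ p, f p ≠ 0 ∧ ∀ i, p < i → f i = 0 := by
  classical
  have hex : ∃ N, ∀ i ≥ N, f i = 0 := ⟨N, hN⟩
  have hpos : Nat.find hex ≠ 0 := fun h => ha (Nat.find_spec hex a (by omega))
  refine ⟨Nat.find hex - 1, fun hp => ?_, fun i hi => Nat.find_spec hex i (by omega)⟩
  refine Nat.find_min hex (by omega : Nat.find hex - 1 < Nat.find hex) fun i hi => ?_
  rcases hi.eq_or_lt with rfl | hi
  · exact hp
  · exact Nat.find_spec hex i (by omega)

lemma expRemainder_epsStar_pos {β : ℝ} (hβ : 1 < β) (n : ℕ) :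
    0 < expRemainder (epsStar β) n β := by
  have hβ0 : 0 ≤ β := by linarith
  unfold epsStar
  split_ifs with hfin
  · obtain ⟨hp, hzero⟩ := hfin.choose_spec
    set p := hfin.choose
    set a : ℕ → ℕ := fun i => if i % (p + 1) = p then epsDig β p - 1 else epsDig β (i % (p + 1))
    have hagree : ∀ j < p, epsDig β j = a j := fun j hj => by
      simp only [a, Nat.mod_eq_of_lt (by omega : j < p + 1), if_neg hj.ne]
    have hap : (a p : ℝ) = epsDig β p - 1 := by
      simp only [a, Nat.mod_eq_of_lt p.lt_succ_self, if_pos, Nat.cast_pred (Nat.pos_of_ne_zero hp)]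
    refine expRemainder_pos_of_periodic hβ0 p.succ_ne_zero (fun j => ?_) (fun k hk => ?_) ?_ n
    · simp only [a, Nat.add_mod_left]
    · rw [expRemainder_eq_betaT_iterate hβ0 fun j hj => hagree j (by omega)]
      exact betaT_iterate_pos_of_epsDig_ne_zero (by omega) hp
    · rw [expRemainder, expRemainder_eq_betaT_iterate hβ0 hagree, hap]
      linarith [betaT_iterate_succ hβ0 p, betaT_iterate_nonneg β (p + 1)]
  · rw [expRemainder_eq_betaT_iterate hβ0 fun _ _ => rfl]
    by_contra! hle
    refine hfin (exists_last_ne_zero (epsDig_zero_pos hβ).ne' (N := n) fun i hi => ?_)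
    by_contra hi0
    exact hle.not_gt (betaT_iterate_pos_of_epsDig_ne_zero hi hi0)

lemma epsStar_le_of_mul_expRemainder_le {β : ℝ} (hβ : 1 < β) {w : ℕ → ℕ} {k : ℕ}
    (hagree : ∀ j < k, epsStar β j = w j) (hbound : β * expRemainder w k β ≤ w k + 1) :
    epsStar β k ≤ w k := by
  by_contra! hlt
  have hpos := expRemainder_epsStar_pos hβ (k + 1)
  rw [expRemainder, expRemainder_congr hagree] at hpos
  have : (w k : ℝ) + 1 ≤ epsStar β k := by exact_mod_cast hlt
  linarith

lemma wordLexLe_of_forall_le {n : ℕ} {a b : ℕ → ℕ}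
    (h : ∀ k < n, (∀ j < k, a j = b j) → a k ≤ b k) : wordLexLe n a b := by
  classical
  by_cases hall : ∀ j < n, a j = b j
  · exact Or.inr hall
  have hex : ∃ k, k < n ∧ a k ≠ b k := by simpa using hall
  obtain ⟨hk, hne⟩ := Nat.find_spec hex
  have hagree : ∀ j < Nat.find hex, a j = b j := fun j hj => by
    by_contra hj'
    exact Nat.find_min hex hj ⟨hj.trans hk, hj'⟩
  exact Or.inl ⟨_, hk, hagree, (h _ hk hagree).lt_of_ne hne⟩

lemma seqLexLt_of_wordLexLe {n : ℕ} {a b c : ℕ → ℕ} (h : wordLexLe (n + 1) a b)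
    (hbc : ∀ j < n, b j = c j) (hlt : b n < c n) : seqLexLt a c := by
  rcases h with ⟨k, hk, hab, hk'⟩ | hab
  · refine ⟨k, fun j hj => (hab j hj).trans (hbc j (by omega)), hk'.trans_le ?_⟩
    rcases (Nat.lt_succ_iff.1 hk).lt_or_eq with hk | rfl
    · exact (hbc k hk).le
    · exact hlt.le
  · exact ⟨n, fun j hj => (hab j (by omega)).trans (hbc j hj),
      (hab n n.lt_succ_self).trans_lt hlt⟩

lemma seqLexLe.trans_lt {a b c : ℕ → ℕ} (hab : seqLexLe a b) (hbc : seqLexLt b c) :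
    seqLexLt a c :=
  (le_iff_lt_or_eq.2 (hab.imp id (congrArg toLex)) : toLex a ≤ toLex b).trans_lt hbc

lemma seqLexLt_of_exists_ne {a b : ℕ → ℕ} (hex : ∃ k, a k ≠ b k)
    (hfirst : ∀ k, (∀ j < k, a j = b j) → a k ≠ b k → a k < b k) : seqLexLt a b := by
  classical
  have hagree : ∀ j < Nat.find hex, a j = b j := fun j hj => not_not.1 (Nat.find_min hex hj)
  exact ⟨_, hagree, hfirst _ hagree (Nat.find_spec hex)⟩

lemma bddAbove_cylP {n : ℕ} (hn : n ≠ 0) (w : ℕ → ℕ) : BddAbove (cylP n w) := by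
  refine ⟨w 0 + 1, fun β hβ => ?_⟩
  have h := mul_lt_epsDig_add_one (zero_le_one.trans hβ.1.le) 0
  rw [Function.iterate_zero_apply, mul_one, hβ.2 0 (Nat.pos_of_ne_zero hn)] at h
  exact h.le

lemma mul_expRemainder_le_of_mem_closure_cylP {n k : ℕ} {w : ℕ → ℕ} (hk : k < n) {β : ℝ}
    (hβ : β ∈ closure (cylP n w)) : β * expRemainder w k β ≤ w k + 1 := by
  refine closure_minimal (fun γ hγ => ?_)
    (isClosed_le (continuous_id.mul (continuous_expRemainder w k)) continuous_const) hβ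
  have hγ0 : 0 ≤ γ := zero_le_one.trans hγ.1.le
  change γ * expRemainder w k γ ≤ w k + 1
  rw [expRemainder_eq_betaT_iterate hγ0 fun j hj => hγ.2 j (by omega), ← hγ.2 k hk]
  exact (mul_lt_epsDig_add_one hγ0 k).le

lemma wordLexLe_epsStar_sSup_cylP {n : ℕ} {w : ℕ → ℕ} (hn : n ≠ 0)
    (hne : (cylP n w).Nonempty) : wordLexLe n (epsStar (sSup (cylP n w))) w := by
  have hbdd := bddAbove_cylP hn w
  obtain ⟨β, hβ⟩ := hne
  have hsup : 1 < sSup (cylP n w) := hβ.1.trans_le (le_csSup hbdd hβ)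
  exact wordLexLe_of_forall_le fun k hk hagree => epsStar_le_of_mul_expRemainder_le hsup hagree
    (mul_expRemainder_le_of_mem_closure_cylP hk (csSup_mem_closure ⟨β, hβ⟩ hbdd))

def prefixZeros (d : ℕ → ℕ) (n : ℕ) (w : ℕ → ℕ) (l : ℕ) : ℕ :=
  if l < n then d l else if l < 2 * n then 0 else w (l - 2 * n)

section prefixZeros

variable {d w : ℕ → ℕ} {n l : ℕ}

lemma prefixZeros_of_lt (h : l < n) : prefixZeros d n w l = d l := if_pos h

lemma prefixZeros_of_le_of_lt (h₁ : n ≤ l) (h₂ : l < 2 * n) : prefixZeros d n w l = 0 := by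
  rw [prefixZeros, if_neg (by omega), if_pos h₂]

lemma prefixZeros_two_mul_add (l : ℕ) : prefixZeros d n w (2 * n + l) = w l := by
  rw [prefixZeros, if_neg (by omega), if_neg (by omega), Nat.add_sub_cancel_left]

end prefixZeros

lemma shift_prefixZeros_lt {β : ℝ} (hβ : 1 < β) {m i : ℕ} (hm : epsDig β m ≠ 0) (hi : i ≠ 0)
    (him : i ≤ m) (w : ℕ → ℕ) :
    seqLexLt (fun j => prefixZeros (epsDig β) (m + 1) w (i + j))
      (prefixZeros (epsDig β) (m + 1) w) := by
  have hzero : ∀ k, m + 1 ≤ i + k → k ≤ m → prefixZeros (epsDig β) (m + 1) w (i + k) = 0 :=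
    fun k h₁ h₂ => prefixZeros_of_le_of_lt h₁ (by omega)
  have hdiff : prefixZeros (epsDig β) (m + 1) w (i + m) ≠ prefixZeros (epsDig β) (m + 1) w m := by
    rw [hzero m (by omega) le_rfl, prefixZeros_of_lt m.lt_succ_self]
    exact hm.symm
  refine seqLexLt_of_exists_ne ⟨m, hdiff⟩ fun k hagree hne => ?_
  have hkm : k ≤ m := by
    by_contra! hk
    exact hdiff (hagree m hk)
  rcases le_or_gt (i + k) m with hik | hik
  · rw [prefixZeros_of_lt (by omega), prefixZeros_of_lt (by omega)] at hne ⊢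
    refine (epsDig_add_le_epsDig hβ hi fun l hl => ?_).lt_of_ne hne
    simpa only [prefixZeros_of_lt (by omega : i + l < m + 1),
      prefixZeros_of_lt (by omega : l < m + 1)] using hagree l hl
  · rw [hzero k hik hkm] at hne ⊢
    exact Nat.pos_of_ne_zero hne.symm

theorem prefix_zeros_self_admissible_general (β₀ β₁ : ℝ) (h0 : 1 < β₀) (h01 : β₀ < β₁)
    (m : ℕ) (hpre : ∀ i < m, epsDig β₀ i = epsDig β₁ i)
    (hdiff : epsDig β₀ m ≠ epsDig β₁ m)
    (w : ℕ → ℕ) (hw : w ∈ Sbeta (sSup (cylP (m + 1) (epsDig β₀)))) :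
    ∀ i, 1 ≤ i →
      seqLexLt
        (fun j => (fun l => if l < m + 1 then epsDig β₁ l
          else if l < 2 * (m + 1) then 0 else w (l - 2 * (m + 1))) (i + j))
        (fun l => if l < m + 1 then epsDig β₁ l
          else if l < 2 * (m + 1) then 0 else w (l - 2 * (m + 1))) := by
  intro i hi
  change seqLexLt (fun j => prefixZeros (epsDig β₁) (m + 1) w (i + j))
    (prefixZeros (epsDig β₁) (m + 1) w)
  have hβ₁ : 1 < β₁ := h0.trans h01
  have hm : epsDig β₀ m < epsDig β₁ m := (epsDig_le_of_lt (by linarith) h01 hpre).lt_of_ne hdiff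
  rcases lt_or_ge i (m + 1) with him | him
  · exact shift_prefixZeros_lt hβ₁ (by omega) (by omega) (by omega) w
  rcases lt_or_ge i (2 * (m + 1)) with hi₂ | hi₂
  · refine ⟨0, fun j hj => absurd hj j.not_lt_zero, ?_⟩
    change prefixZeros (epsDig β₁) (m + 1) w (i + 0) < prefixZeros (epsDig β₁) (m + 1) w 0
    rw [prefixZeros_of_le_of_lt (by omega) (by omega), prefixZeros_of_lt m.succ_pos]
    exact epsDig_zero_pos hβ₁
  obtain ⟨k, rfl⟩ := Nat.exists_eq_add_of_le hi₂
  simp only [add_assoc, prefixZeros_two_mul_add]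
  have hε : wordLexLe (m + 1) (epsStar (sSup (cylP (m + 1) (epsDig β₀)))) (epsDig β₀) :=
    wordLexLe_epsStar_sSup_cylP m.succ_ne_zero ⟨β₀, h0, fun _ _ => rfl⟩
  refine (hw k).trans_lt (seqLexLt_of_wordLexLe hε (fun j hj => ?_) ?_)
  · rw [prefixZeros_of_lt (by omega), hpre j hj]
  · rwa [prefixZeros_of_lt m.lt_succ_self]

/-- Lemma 5.3. Let `1 < β₀ < β₁` both have infinite expansions
of 1, let `m` be the (0-indexed) first place where the expansions of 1 differ and
let `β₂` be the right endpoint of the cylinder `I_{m+1}^P(ε_1(1,β₀),…,ε_{m+1}(1,β₀))`.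
Then for every `w ∈ S_{β₂}`, the sequence
`ε = (ε_1(1,β₁),…,ε_{m+1}(1,β₁), 0^{m+1}, w)` is self-admissible:
`σ^i ε ≺ ε` for all `i ≥ 1`. -/
theorem prefix_zeros_self_admissible (β₀ β₁ : ℝ) (h0 : 1 < β₀) (h01 : β₀ < β₁)
    (hinf0 : ∀ N, ∃ i ≥ N, epsDig β₀ i ≠ 0)
    (hinf1 : ∀ N, ∃ i ≥ N, epsDig β₁ i ≠ 0)
    (m : ℕ) (hpre : ∀ i < m, epsDig β₀ i = epsDig β₁ i)
    (hdiff : epsDig β₀ m ≠ epsDig β₁ m)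
    (w : ℕ → ℕ) (hw : w ∈ Sbeta (sSup (cylP (m + 1) (epsDig β₀)))) :
    ∀ i, 1 ≤ i →
      seqLexLt
        (fun j => (fun l => if l < m + 1 then epsDig β₁ l
          else if l < 2 * (m + 1) then 0 else w (l - 2 * (m + 1))) (i + j))
        (fun l => if l < m + 1 then epsDig β₁ l
          else if l < 2 * (m + 1) then 0 else w (l - 2 * (m + 1))) :=
  prefix_zeros_self_admissible_general β₀ β₁ h0 h01 m hpre hdiff w hw
end

section
/- Let β > 1 be such that the β-expansion of 1 has infinitely many nonzero digits. Then for every n ≥ 1, the run length ℓ_n(β) of zeros after the n-th digit is finite and β^{−(ℓ_n(β)+1)} ≤ T_β^n 1 ≤ (β+1)·β^{−(ℓ_n(β)+1)}. -/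
open Filter MeasureTheory Set
open scoped ENNReal

/-- formula (8.2). If the β-expansion of 1 has infinitely many
nonzero digits, then for every `n ≥ 1` the run of zeros after the `n`-th digit is
finite and `β^{-(ℓ_n(β)+1)} ≤ T_β^n 1 ≤ (β+1) β^{-(ℓ_n(β)+1)}`. -/
theorem orbit_vs_run_length (β : ℝ) (hβ : 1 < β)
    (hinf : ∀ N, ∃ i ≥ N, epsDig β i ≠ 0) :
    ∀ n, 1 ≤ n →
      BddAbove {k | ∀ j < k, epsDig β (n + j) = 0} ∧
      β ^ (-(runLen β n : ℤ) - 1) ≤ (betaT β)^[n] 1 ∧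
      (betaT β)^[n] 1 ≤ (β + 1) * β ^ (-(runLen β n : ℤ) - 1) := by
  have hβ0 : (0 : ℝ) < β := lt_trans one_pos hβ
  -- orbit points are in [0,1) for positive iterates
  have hx01 : ∀ i : ℕ, 1 ≤ i → 0 ≤ (betaT β)^[i] 1 ∧ (betaT β)^[i] 1 < 1 := by
    intro i hi
    obtain ⟨m, rfl⟩ := Nat.exists_eq_add_of_le' hi
    rw [Function.iterate_succ_apply']
    have : betaT β ((betaT β)^[m] 1) = Int.fract (β * (betaT β)^[m] 1) := rfl
    rw [this]
    exact ⟨Int.fract_nonneg _, Int.fract_lt_one _⟩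
  intro n hn
  -- if the run of zeros has length ≥ k, the orbit multiplies by β^k
  have key : ∀ k : ℕ, (∀ j < k, epsDig β (n + j) = 0) →
      (betaT β)^[n + k] 1 = β ^ k * (betaT β)^[n] 1 := by
    intro k
    induction k with
    | zero => simp
    | succ k ih =>
      intro h
      have hk := ih (fun j hj => h j (Nat.lt_succ_of_lt hj))
      have hx0 : 0 ≤ (betaT β)^[n + k] 1 :=
        (hx01 (n + k) (le_trans hn (Nat.le_add_right _ _))).1
      have hnn : (0 : ℤ) ≤ ⌊β * (betaT β)^[n + k] 1⌋ :=
        Int.floor_nonneg.2 (mul_nonneg (le_of_lt hβ0) hx0)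
      have h0 : epsDig β (n + k) = 0 := h k (Nat.lt_succ_self k)
      have hfl : ⌊β * (betaT β)^[n + k] 1⌋ = 0 := by
        unfold epsDig at h0
        omega
      have hstep : (betaT β)^[n + (k + 1)] 1 = β * (betaT β)^[n + k] 1 := by
        have h1 : n + (k + 1) = (n + k) + 1 := by ring
        rw [h1, Function.iterate_succ_apply']
        show β * (betaT β)^[n + k] 1 - (⌊β * (betaT β)^[n + k] 1⌋ : ℝ)
            = β * (betaT β)^[n + k] 1
        rw [hfl]; simp
      rw [hstep, hk]; ring
  -- boundedness
  obtain ⟨i, hi, hine⟩ := hinf n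
  have hbdd : BddAbove {k | ∀ j < k, epsDig β (n + j) = 0} := by
    refine ⟨i - n, fun k hk => ?_⟩
    by_contra hlt
    push_neg at hlt
    have := hk (i - n) hlt
    rw [Nat.add_sub_cancel' hi] at this
    exact hine this
  refine ⟨hbdd, ?_⟩
  set ℓ := runLen β n with hℓ
  have hdef : ℓ = sSup {k | ∀ j < k, epsDig β (n + j) = 0} := rfl
  have hmem : ∀ j < ℓ, epsDig β (n + j) = 0 := by
    have h0 : (0 : ℕ) ∈ {k | ∀ j < k, epsDig β (n + j) = 0} := by
      intro j hj; omega
    exact Nat.sSup_mem ⟨0, h0⟩ hbdd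
  have hne : epsDig β (n + ℓ) ≠ 0 := by
    intro h0
    have hmem' : (ℓ + 1) ∈ {k | ∀ j < k, epsDig β (n + j) = 0} := by
      intro j hj
      rcases Nat.lt_succ_iff_lt_or_eq.mp hj with h | h
      · exact hmem j h
      · rw [h]; exact h0
    have h2 := le_csSup hbdd hmem'
    rw [← hdef] at h2
    omega
  have hkey := key ℓ hmem
  have hxn0 : 0 ≤ (betaT β)^[n] 1 := (hx01 n hn).1
  have hxl1 : (betaT β)^[n + ℓ] 1 < 1 := (hx01 (n + ℓ) (le_trans hn (Nat.le_add_right _ _))).2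
  -- lower bound ingredient: 1 ≤ β^(ℓ+1) * x_n
  have hlow : 1 ≤ β ^ (ℓ + 1) * (betaT β)^[n] 1 := by
    have h1 : (1 : ℤ) ≤ ⌊β * (betaT β)^[n + ℓ] 1⌋ := by
      by_contra h
      push_neg at h
      unfold epsDig at hne
      omega
    have h2 : (1 : ℝ) ≤ β * (betaT β)^[n + ℓ] 1 := by
      have := Int.le_floor.mp h1
      exact_mod_cast this
    rw [hkey] at h2
    calc (1 : ℝ) ≤ β * (β ^ ℓ * (betaT β)^[n] 1) := h2
      _ = β ^ (ℓ + 1) * (betaT β)^[n] 1 := by rw [pow_succ]; ring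
  have hup : β ^ ℓ * (betaT β)^[n] 1 < 1 := by rw [← hkey]; exact hxl1
  have hpow : β ^ (-(ℓ : ℤ) - 1) = (β ^ (ℓ + 1) : ℝ)⁻¹ := by
    rw [show (-(ℓ : ℤ) - 1) = -((ℓ + 1 : ℕ) : ℤ) by push_cast; ring, zpow_neg, zpow_natCast]
  have hP : (0 : ℝ) < β ^ (ℓ + 1) := pow_pos hβ0 _
  have hA : (0 : ℝ) < β ^ ℓ := pow_pos hβ0 _
  constructor
  · rw [hpow, inv_eq_one_div, div_le_iff₀ hP]
    nlinarith [hlow]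
  · rw [hpow, ← div_eq_mul_inv, le_div_iff₀ hP, pow_succ]
    nlinarith [hup, hxn0, hA]
end
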